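/- arXiv:1811.08358 — 8 statements merged into one kernel-verified Lean document; each statement's English description precedes it below -/
import Mathlib

section
/- Assume F : ℝ^d_≥ → ℝ^d is block-constant on all of ℝ^d_≥ and Lipschitz continuous with Lipschitz constant ‖F‖_Lip (with respect to the Euclidean norm). Then for all d×d Hermitian matrices A and B, ‖𝓛_F(A) − 𝓛_F(B)‖₂ ≤ ‖F‖_Lip ‖A − B‖₂, where ‖·‖₂ is the Frobenius norm. -/
/-!
With `W = U* V` one has `U diag(x) U* - V diag(y) V* = U (diag(x) W - W diag(y)) V*`, whose
squared Frobenius norm is `∑ m n, |W m n|² (x m - y n)²`, and the weights `|W m n|²` form a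
doubly stochastic matrix. So it suffices that the cost `c m n = K² (α m - β n)² - (F α m - F β n)²`
has a nonnegative sum against every doubly stochastic matrix, i.e. (Birkhoff) against every
permutation. Its diagonal sum is nonnegative by the Lipschitz bound, and `c` is a Monge array
because block-constancy gives `|F x a - F x b| ≤ K (x a - x b)` for `a ≤ b`: merge two adjacent
entries of `x` into their mean. For a Monge cost the identity is an optimal assignment, as one
sees by uncrossing one transposition at a time.
-/

open Matrix

/-- The Euclidean norm of a vector in `ℝ^d`. -/
noncomputable def eucNorm {d : ℕ} (x : Fin d → ℝ) : ℝ :=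
  Real.sqrt (∑ i, (x i) ^ 2)

/-- The Frobenius norm of a complex `d × d` matrix. -/
noncomputable def frob {d : ℕ} (M : Matrix (Fin d) (Fin d) ℂ) : ℝ :=
  Real.sqrt (∑ i, ∑ j, ‖M i j‖ ^ 2)

open Equiv Finset

def IsMonge {ι : Type*} [LinearOrder ι] (c : ι → ι → ℝ) : Prop :=
  ∀ ⦃a b p q⦄, a ≤ b → p ≤ q → c a p + c b q ≤ c a q + c b p

namespace IsMonge

variable {ι : Type*} [Fintype ι] [LinearOrder ι] {c : ι → ι → ℝ}

theorem sum_diag_le_sum_comp_perm (hc : IsMonge c) (σ : Perm ι) :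
    ∑ i, c i i ≤ ∑ i, c i (σ i) := by
  induction hσ : #σ.support using Nat.strong_induction_on generalizing σ with
  | _ N ih =>
  subst hσ
  obtain hσ1 | hne := σ.support.eq_empty_or_nonempty
  · simp [Perm.support_eq_empty_iff.mp hσ1]
  set a := σ.support.min' hne
  have hσa : σ a ≠ a := Perm.mem_support.mp (min'_mem _ hne)
  set b := σ⁻¹ a
  have hσb : σ b = a := σ.apply_symm_apply a
  have hab : a ≠ b := fun h => hσa (by nth_rw 1 [h]; exact hσb)
  have hab' : a ≤ b := min'_le _ _ (Perm.mem_support.mpr (by rw [hσb]; exact hab))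
  have haσa : a ≤ σ a := min'_le _ _ (Perm.apply_mem_support.mpr (min'_mem _ hne))
  -- `τ` agrees with `σ` except that `τ a = a` and `τ b = σ a`, and it has a smaller support.
  set τ := swap a (σ a) * σ
  have hτ : ∑ i, c i (τ i) ≤ ∑ i, c i (σ i) := by
    rw [← sub_nonneg, ← sum_sub_distrib,
      Fintype.sum_eq_add a b hab fun i ⟨hia, hib⟩ => ?_]
    · simp only [τ, Perm.mul_apply, hσb, swap_apply_right, swap_apply_left]
      linarith [hc hab' haσa]
    · have : σ i ≠ a := fun h => hib (by rw [← hσb] at h; exact σ.injective h)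
      have : σ i ≠ σ a := fun h => hia (σ.injective h)
      simp [τ, swap_apply_of_ne_of_ne, *]
  exact (ih _ (Perm.card_support_swap_mul hσa) τ rfl).trans hτ

theorem sum_diag_le_sum_mul_of_mem_doublyStochastic (hc : IsMonge c)
    {S : Matrix ι ι ℝ} (hS : S ∈ doublyStochastic ℝ ι) :
    ∑ i, c i i ≤ ∑ i, ∑ j, S i j * c i j := by
  have hlin : IsLinearMap ℝ fun M : Matrix ι ι ℝ => ∑ i, ∑ j, M i j * c i j :=
    ⟨fun M N => by simp only [Matrix.add_apply, add_mul, sum_add_distrib],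
      fun r M => by simp only [Matrix.smul_apply, smul_eq_mul, mul_sum, mul_assoc]⟩
  rw [← SetLike.mem_coe, doublyStochastic_eq_convexHull_permMatrix] at hS
  refine convexHull_min ?_ (convex_halfSpace_ge hlin _) hS
  rintro _ ⟨σ, rfl⟩
  simpa [Perm.permMatrix, PEquiv.toMatrix_apply] using hc.sum_diag_le_sum_comp_perm σ

end IsMonge

section
variable {n : Type*} [Fintype n]

theorem trace_star_mul_self (M : Matrix n n ℂ) :
    (star M * M).trace = ((∑ i, ∑ j, ‖M i j‖ ^ 2 : ℝ) : ℂ) := by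
  rw [sum_comm]
  simp [trace, mul_apply, Complex.conj_mul']

variable [DecidableEq n]

theorem norm_sq_entries_mem_doublyStochastic {W : Matrix n n ℂ} (hW : W ∈ unitaryGroup n ℂ) :
    (fun i j => ‖W i j‖ ^ 2 : Matrix n n ℝ) ∈ doublyStochastic ℝ n := by
  have row_sum : ∀ M : Matrix n n ℂ, M * star M = 1 → ∀ i, ∑ j, ‖M i j‖ ^ 2 = 1 := by
    intro M hM i
    have := congrFun (congrFun hM i) i
    simp only [mul_apply, star_apply, RCLike.star_def, Complex.mul_conj',
      one_apply_eq] at this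
    exact_mod_cast this
  refine mem_doublyStochastic_iff_sum.mpr ⟨fun _ _ => by positivity,
    row_sum W (mem_unitaryGroup_iff.mp hW), fun j => ?_⟩
  simpa using row_sum (star W) (by rw [star_star]; exact mem_unitaryGroup_iff'.mp hW) j

end

section
variable {d : ℕ}

theorem frob_sq (M : Matrix (Fin d) (Fin d) ℂ) : frob M ^ 2 = ∑ i, ∑ j, ‖M i j‖ ^ 2 :=
  Real.sq_sqrt (by positivity)

theorem frob_mul_mul_star {P Q : Matrix (Fin d) (Fin d) ℂ} (hP : P ∈ unitaryGroup (Fin d) ℂ)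
    (hQ : Q ∈ unitaryGroup (Fin d) ℂ) (N : Matrix (Fin d) (Fin d) ℂ) :
    frob (P * N * star Q) = frob N := by
  have hPP : star P * P = 1 := mem_unitaryGroup_iff'.mp hP
  have hQQ : star Q * Q = 1 := mem_unitaryGroup_iff'.mp hQ
  have : star (P * N * star Q) * (P * N * star Q) = Q * (star N * N) * star Q := by
    simp only [star_mul, star_star, mul_assoc, ← mul_assoc (star P) P, hPP, one_mul]
  unfold frob
  congr 1
  apply Complex.ofReal_injective
  rw [← trace_star_mul_self, ← trace_star_mul_self, this, trace_mul_cycle, hQQ, one_mul]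

theorem frob_sq_conj_diagonal_sub_conj_diagonal {U V : Matrix (Fin d) (Fin d) ℂ}
    (hU : U ∈ unitaryGroup (Fin d) ℂ) (hV : V ∈ unitaryGroup (Fin d) ℂ) (v w : Fin d → ℝ) :
    frob (U * diagonal (fun i => (v i : ℂ)) * star U
        - V * diagonal (fun i => (w i : ℂ)) * star V) ^ 2
      = ∑ i, ∑ j, ‖(star U * V) i j‖ ^ 2 * (v i - w j) ^ 2 := by
  have hUU : U * star U = 1 := mem_unitaryGroup_iff.mp hU
  have hVV : V * star V = 1 := mem_unitaryGroup_iff.mp hV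
  have : U * diagonal (fun i => (v i : ℂ)) * star U
        - V * diagonal (fun i => (w i : ℂ)) * star V
      = U * (diagonal (fun i => (v i : ℂ)) * (star U * V)
        - (star U * V) * diagonal (fun i => (w i : ℂ))) * star V := by
    simp only [mul_sub, sub_mul, mul_assoc, hVV, mul_one, ← mul_assoc U (star U), hUU, one_mul]
  rw [this, frob_mul_mul_star hU hV, frob_sq]
  refine sum_congr rfl fun i _ => sum_congr rfl fun j _ => ?_
  have : (v i : ℂ) * (star U * V) i j - (star U * V) i j * w j
      = ((v i - w j : ℝ) : ℂ) * (star U * V) i j := by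
    push_cast; ring
  rw [Matrix.sub_apply, diagonal_mul, mul_diagonal, this, norm_mul, Complex.norm_real,
    Real.norm_eq_abs, mul_pow, sq_abs, mul_comm]

end

theorem eucNorm_sq {d : ℕ} (x : Fin d → ℝ) : eucNorm x ^ 2 = ∑ i, x i ^ 2 :=
  Real.sq_sqrt (by positivity)

def IsBlockConstant {d : ℕ} (F : (Fin d → ℝ) → Fin d → ℝ) : Prop :=
  ∀ x : Fin d → ℝ, Antitone x → ∀ m n, x m = x n → F x m = F x n

def IsLipschitzOnAntitone {d : ℕ} (K : ℝ) (F : (Fin d → ℝ) → Fin d → ℝ) : Prop :=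
  ∀ x y : Fin d → ℝ, Antitone x → Antitone y → eucNorm (F x - F y) ≤ K * eucNorm (x - y)

theorem abs_sub_succ_le_of_isBlockConstant {n : ℕ}
    {F : (Fin (n + 1) → ℝ) → Fin (n + 1) → ℝ} {K : ℝ} (hK : 0 ≤ K) (hbc : IsBlockConstant F)
    (hLip : IsLipschitzOnAntitone K F)
    {x : Fin (n + 1) → ℝ} (hx : Antitone x) (i : Fin n) :
    |F x i.castSucc - F x i.succ| ≤ K * (x i.castSucc - x i.succ) := by
  set a := i.castSucc
  set b := i.succ
  have hab_lt : a < b := Fin.castSucc_lt_succ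
  have hab : a ≠ b := hab_lt.ne
  set c := (x a + x b) / 2 with hc
  -- Merging the adjacent entries `a` and `b` into their mean `c` keeps `x` antitone and moves
  -- it by `(x a - x b) / √2`, while `F` must take equal values at `a` and `b` afterwards.
  set z : Fin (n + 1) → ℝ := fun k => if k = a ∨ k = b then c else x k
  have hle_a : ∀ k, k ≤ a → c ≤ x k := fun k hk => by linarith [hx hk, hx hab_lt.le]
  have hb_le : ∀ k, b ≤ k → x k ≤ c := fun k hk => by linarith [hx hk, hx hab_lt.le]
  have hz : Antitone z := by
    refine Fin.antitone_iff_succ_le.mpr fun k => ?_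
    simp only [z, a, b, Fin.ext_iff, Fin.val_succ, Fin.val_castSucc] at hle_a hb_le ⊢
    split_ifs with h1 h2 h2
    · exact le_rfl
    · exact hle_a _ (Fin.le_def.mpr (by simp; omega))
    · exact hb_le _ (Fin.le_def.mpr (by simp; omega))
    · exact hx Fin.castSucc_lt_succ.le
  have hxz : eucNorm (x - z) ^ 2 = (x a - x b) ^ 2 / 2 := by
    rw [eucNorm_sq, Fintype.sum_eq_add a b hab fun k hk => by simp [z, hk.1, hk.2]]
    simp only [Pi.sub_apply, z, true_or, or_true, if_true, hc]
    ring
  have hFz : F z a = F z b := hbc z hz a b (by simp [z])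
  have hpair : (F x - F z) a ^ 2 + (F x - F z) b ^ 2 ≤ eucNorm (F x - F z) ^ 2 := by
    rw [eucNorm_sq, ← sum_pair (f := fun k => (F x - F z) k ^ 2) hab]
    exact sum_le_univ_sum_of_nonneg fun _ => sq_nonneg _
  have hLxz : eucNorm (F x - F z) ^ 2 ≤ K ^ 2 * eucNorm (x - z) ^ 2 := by
    rw [← mul_pow]
    exact pow_le_pow_left₀ (Real.sqrt_nonneg _) (hLip x z hx hz) 2
  refine abs_le_of_sq_le_sq ?_ (mul_nonneg hK (by linarith [hx hab_lt.le]))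
  simp only [Pi.sub_apply, hFz] at hpair
  nlinarith [sq_nonneg (F x a + F x b - 2 * F z b)]

theorem abs_sub_le_of_isBlockConstant {d : ℕ} {F : (Fin d → ℝ) → Fin d → ℝ} {K : ℝ}
    (hK : 0 ≤ K) (hbc : IsBlockConstant F) (hLip : IsLipschitzOnAntitone K F)
    {x : Fin d → ℝ} (hx : Antitone x) {a b : Fin d} (hab : a ≤ b) :
    |F x a - F x b| ≤ K * (x a - x b) := by
  obtain _ | n := d
  · exact a.elim0
  have hstep := abs_sub_succ_le_of_isBlockConstant hK hbc hLip hx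
  have hsub : Antitone fun k => K * x k - F x k :=
    Fin.antitone_iff_succ_le.mpr fun i => by linarith [(abs_le.mp (hstep i)).2]
  have hadd : Antitone fun k => K * x k + F x k :=
    Fin.antitone_iff_succ_le.mpr fun i => by linarith [(abs_le.mp (hstep i)).1]
  exact abs_le.mpr ⟨by linarith [hadd hab], by linarith [hsub hab]⟩

theorem isMonge_lipschitz_defect {d : ℕ} {F : (Fin d → ℝ) → Fin d → ℝ} {K : ℝ}
    (hK : 0 ≤ K) (hbc : IsBlockConstant F) (hLip : IsLipschitzOnAntitone K F)
    {x y : Fin d → ℝ} (hx : Antitone x) (hy : Antitone y) :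
    IsMonge fun m n => K ^ 2 * (x m - y n) ^ 2 - (F x m - F y n) ^ 2 := by
  intro a b p q hab hpq
  have hxab := abs_sub_le_of_isBlockConstant hK hbc hLip hx hab
  have hypq := abs_sub_le_of_isBlockConstant hK hbc hLip hy hpq
  have hprod : (F x a - F x b) * (F y p - F y q) ≤ K * (x a - x b) * (K * (y p - y q)) :=
    calc (F x a - F x b) * (F y p - F y q) ≤ |F x a - F x b| * |F y p - F y q| := by
          rw [← abs_mul]; exact le_abs_self _
      _ ≤ K * (x a - x b) * (K * (y p - y q)) :=
          mul_le_mul hxab hypq (abs_nonneg _) ((abs_nonneg _).trans hxab)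
  linear_combination 2 * hprod

theorem LF_lipschitz_general {d : ℕ}
    (F : (Fin d → ℝ) → Fin d → ℝ) (K : ℝ) (hK : 0 ≤ K)
    -- `F` is block-constant on `ℝ^d_≥`:
    (hbc : ∀ x : Fin d → ℝ, Antitone x → ∀ m n, x m = x n → F x m = F x n)
    -- `F` is Lipschitz with constant `K` on `ℝ^d_≥`, w.r.t. the Euclidean norm:
    (hLip : ∀ x y : Fin d → ℝ, Antitone x → Antitone y →
      eucNorm (F x - F y) ≤ K * eucNorm (x - y))
    (A B U V : Matrix (Fin d) (Fin d) ℂ) (α β : Fin d → ℝ)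
    (hU : U ∈ Matrix.unitaryGroup (Fin d) ℂ)
    (hV : V ∈ Matrix.unitaryGroup (Fin d) ℂ)
    (hα : Antitone α) (hβ : Antitone β)
    (hAdec : A = U * Matrix.diagonal (fun i => (α i : ℂ)) * star U)
    (hBdec : B = V * Matrix.diagonal (fun i => (β i : ℂ)) * star V) :
    frob (U * Matrix.diagonal (fun i => (F α i : ℂ)) * star U
        - V * Matrix.diagonal (fun i => (F β i : ℂ)) * star V)
      ≤ K * frob (A - B) := by
  have hdiag : 0 ≤ ∑ i, (K ^ 2 * (α i - β i) ^ 2 - (F α i - F β i) ^ 2) := by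
    have : eucNorm (F α - F β) ^ 2 ≤ (K * eucNorm (α - β)) ^ 2 :=
      pow_le_pow_left₀ (Real.sqrt_nonneg _) (hLip α β hα hβ) 2
    simp only [mul_pow, eucNorm_sq, Pi.sub_apply] at this
    rw [sum_sub_distrib, ← mul_sum]
    linarith
  have hS := norm_sq_entries_mem_doublyStochastic (mul_mem (Unitary.star_mem hU) hV)
  have hcost := hdiag.trans <|
    (isMonge_lipschitz_defect hK hbc hLip hα hβ).sum_diag_le_sum_mul_of_mem_doublyStochastic hS
  have hsq : frob (U * Matrix.diagonal (fun i => (F α i : ℂ)) * star U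
      - V * Matrix.diagonal (fun i => (F β i : ℂ)) * star V) ^ 2 ≤ (K * frob (A - B)) ^ 2 := by
    rw [mul_pow, hAdec, hBdec, frob_sq_conj_diagonal_sub_conj_diagonal hU hV,
      frob_sq_conj_diagonal_sub_conj_diagonal hU hV]
    simp only [mul_sub, sum_sub_distrib, mul_sum, mul_left_comm _ (K ^ 2)] at hcost ⊢
    linarith
  exact (pow_le_pow_iff_left₀ (Real.sqrt_nonneg _) (mul_nonneg hK (Real.sqrt_nonneg _))
    two_ne_zero).mp hsq

/-- **Lipschitz continuity of `𝓛_F`** (Theorem 2 of the paper).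
If `F : ℝ^d_≥ → ℝ^d` is block-constant on all of `ℝ^d_≥` and Lipschitz
continuous with constant `K` (w.r.t. the Euclidean norm), then for all
Hermitian matrices `A = U Λ_α U*` and `B = V Λ_β V*` (with non-increasingly
ordered eigenvalues),
`‖𝓛_F(A) − 𝓛_F(B)‖₂ ≤ K ‖A − B‖₂` in the Frobenius norm. -/
theorem LF_lipschitz {d : ℕ}
    (F : (Fin d → ℝ) → Fin d → ℝ) (K : ℝ) (hK : 0 ≤ K)
    -- `F` is block-constant on `ℝ^d_≥`:
    (hbc : ∀ x : Fin d → ℝ, Antitone x → ∀ m n, x m = x n → F x m = F x n)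
    -- `F` is Lipschitz with constant `K` on `ℝ^d_≥`, w.r.t. the Euclidean norm:
    (hLip : ∀ x y : Fin d → ℝ, Antitone x → Antitone y →
      eucNorm (F x - F y) ≤ K * eucNorm (x - y))
    (A B U V : Matrix (Fin d) (Fin d) ℂ) (α β : Fin d → ℝ)
    (hA : A.IsHermitian) (hB : B.IsHermitian)
    (hU : U ∈ Matrix.unitaryGroup (Fin d) ℂ)
    (hV : V ∈ Matrix.unitaryGroup (Fin d) ℂ)
    (hα : Antitone α) (hβ : Antitone β)
    (hAdec : A = U * Matrix.diagonal (fun i => (α i : ℂ)) * star U)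
    (hBdec : B = V * Matrix.diagonal (fun i => (β i : ℂ)) * star V) :
    frob (U * Matrix.diagonal (fun i => (F α i : ℂ)) * star U
        - V * Matrix.diagonal (fun i => (F β i : ℂ)) * star V)
      ≤ K * frob (A - B) :=
  LF_lipschitz_general F K hK hbc hLip A B U V α β hU hV hα hβ hAdec hBdec
end

section
/- (Daleskii–Krein theorem.) Let f : ℝ → ℝ be a C¹-function and let A = U Λ_α U* be a d×d Hermitian matrix with non-increasingly ordered eigenvalue vector α and unitary U. Then the scalar matrix function 𝓛_f (defined by applying f to each eigenvalue) is Fréchet differentiable at A, and for every Hermitian matrix E, setting Ê = U*EU, the Fréchet derivative is 𝓛_f'(E) = U( [f,α] ∘ Ê )U*, where ∘ is Hadamard multiplication and [f,α] is the matrix of divided differences [f,α](m,n) = (f(α_m)−f(α_n))/(α_m−α_n) when α_m ≠ α_n and [f,α](m,n) = f'(α_m) when α_m = α_n. -/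
open Matrix Filter

attribute [local instance] Matrix.frobeniusNormedAddCommGroup Matrix.frobeniusNormedSpace

/-- The matrix `[f,α]` of divided differences of a scalar function `f`. -/
noncomputable def divDiff {d : ℕ} (f : ℝ → ℝ) (α : Fin d → ℝ) (m n : Fin d) : ℝ :=
  if α m = α n then deriv f (α m)
  else (f (α m) - f (α n)) / (α m - α n)

/-!
Approximate `f'` uniformly, on an interval `K` containing the spectra of all matrices near `A`,
by a polynomial `q`, and let `p` be a primitive of `q`; then `g = f - p` has `|g'| ≤ ε` on `K`.
For the polynomial part, `B ↦ p(B)` is differentiable by the noncommutative power rule, and in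
the eigenbasis `U` of `A = U Λ_α U*` the derivative of `B ↦ B ^ k` is the Hadamard multiplier
by `[X ^ k, α](m, n) = ∑ i < k, α_m ^ (k - 1 - i) α_n ^ i`. For `g`, write `B = V Λ_ξ V*`:
conjugating by `V*` on the left and `U` on the right turns `𝓛_g(B) - 𝓛_g(A)` into the Hadamard
product of `V* U` with `(g(ξ_i) - g(α_j))_ij`, which is entrywise at most `ε` times the
corresponding product for `B - A`. Since the Frobenius norm is unitarily invariant, both
`𝓛_g(B) - 𝓛_g(A)` and its linearization are `O(ε ‖B - A‖)`.
-/

namespace Matrix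

section Frobenius

variable {𝕜 : Type*} [RCLike 𝕜] {m n : Type*} [Fintype m] [Fintype n]

lemma frobenius_norm_sq (X : Matrix m n 𝕜) : ‖X‖ ^ 2 = ∑ i, ∑ j, ‖X i j‖ ^ 2 := by
  rw [frobenius_norm_def, ← Real.rpow_natCast, ← Real.rpow_mul (by positivity)]
  norm_num

lemma frobenius_norm_sq_eq_re_trace (X : Matrix m n 𝕜) :
    ‖X‖ ^ 2 = RCLike.re (Xᴴ * X).trace := by
  simp only [frobenius_norm_sq, trace, diag_apply, mul_apply, conjTranspose_apply, map_sum,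
    RCLike.star_def, RCLike.conj_mul]
  rw [Finset.sum_comm]
  norm_cast

lemma norm_entry_le_frobenius_norm (X : Matrix m n 𝕜) (i : m) (j : n) : ‖X i j‖ ≤ ‖X‖ := by
  refine le_of_pow_le_pow_left₀ two_ne_zero (norm_nonneg _) ?_
  rw [frobenius_norm_sq]
  exact (Finset.single_le_sum (fun j _ => sq_nonneg ‖X i j‖) (Finset.mem_univ j)).trans
    (Finset.single_le_sum (f := fun i => ∑ j, ‖X i j‖ ^ 2)
      (fun _ _ => Finset.sum_nonneg fun _ _ => sq_nonneg _) (Finset.mem_univ i))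

lemma frobenius_norm_le_of_norm_entry_le {X Y : Matrix m n 𝕜} {L : ℝ} (hL : 0 ≤ L)
    (h : ∀ i j, ‖X i j‖ ≤ L * ‖Y i j‖) : ‖X‖ ≤ L * ‖Y‖ := by
  refine le_of_pow_le_pow_left₀ two_ne_zero (by positivity) ?_
  calc ‖X‖ ^ 2 ≤ ∑ i, ∑ j, (L * ‖Y i j‖) ^ 2 := by
        rw [frobenius_norm_sq]
        gcongr with i _ j _
        exact h i j
    _ = (L * ‖Y‖) ^ 2 := by simp only [mul_pow, frobenius_norm_sq, Finset.mul_sum]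

lemma frobenius_norm_unitary_mul [DecidableEq m] {U : Matrix m m 𝕜}
    (hU : U ∈ unitaryGroup m 𝕜) (X : Matrix m n 𝕜) : ‖U * X‖ = ‖X‖ := by
  refine (sq_eq_sq₀ (norm_nonneg _) (norm_nonneg _)).mp ?_
  rw [frobenius_norm_sq_eq_re_trace, frobenius_norm_sq_eq_re_trace, conjTranspose_mul,
    Matrix.mul_assoc, ← Matrix.mul_assoc Uᴴ, ← star_eq_conjTranspose,
    mem_unitaryGroup_iff'.mp hU, Matrix.one_mul]

lemma frobenius_norm_mul_unitary [DecidableEq n] {U : Matrix n n 𝕜}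
    (hU : U ∈ unitaryGroup n 𝕜) (X : Matrix m n 𝕜) : ‖X * U‖ = ‖X‖ := by
  rw [← frobenius_norm_conjTranspose, conjTranspose_mul, ← star_eq_conjTranspose U,
    frobenius_norm_unitary_mul (Unitary.star_mem hU), frobenius_norm_conjTranspose]

end Frobenius

variable {n : Type*} [Fintype n]

section ConjDiagonal

variable [DecidableEq n]

def conjDiagonal (V : Matrix n n ℂ) (ξ : n → ℝ) : Matrix n n ℂ :=
  V * diagonal (fun i => (ξ i : ℂ)) * star V

lemma conjDiagonal_add (V : Matrix n n ℂ) (ξ η : n → ℝ) :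
    conjDiagonal V (ξ + η) = conjDiagonal V ξ + conjDiagonal V η := by
  simp only [conjDiagonal, ← Matrix.add_mul, ← Matrix.mul_add, diagonal_add, Pi.add_apply,
    Complex.ofReal_add]

lemma star_mul_conjDiagonal_mul {V : Matrix n n ℂ} (hV : V ∈ unitaryGroup n ℂ) (ξ : n → ℝ) :
    star V * conjDiagonal V ξ * V = diagonal (fun i => (ξ i : ℂ)) := by
  simp only [conjDiagonal, ← Matrix.mul_assoc, mem_unitaryGroup_iff'.mp hV, Matrix.one_mul]
  rw [Matrix.mul_assoc, mem_unitaryGroup_iff'.mp hV, Matrix.mul_one]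

lemma abs_le_norm_conjDiagonal {V : Matrix n n ℂ} (hV : V ∈ unitaryGroup n ℂ) (ξ : n → ℝ)
    (i : n) : |ξ i| ≤ ‖conjDiagonal V ξ‖ := by
  have h := norm_entry_le_frobenius_norm (star V * conjDiagonal V ξ * V) i i
  rwa [frobenius_norm_mul_unitary hV, frobenius_norm_unitary_mul (Unitary.star_mem hV),
    star_mul_conjDiagonal_mul hV, diagonal_apply_eq, Complex.norm_real] at h

lemma star_mul_conjDiagonal_sub_mul {V W : Matrix n n ℂ} (hV : V ∈ unitaryGroup n ℂ)
    (hW : W ∈ unitaryGroup n ℂ) (ξ θ : n → ℝ) :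
    star V * (conjDiagonal V ξ - conjDiagonal W θ) * W
      = of fun i j => ((ξ i - θ j : ℝ) : ℂ) * (star V * W) i j := by
  have hcommutator : star V * (conjDiagonal V ξ - conjDiagonal W θ) * W
      = diagonal (fun i => (ξ i : ℂ)) * (star V * W)
        - (star V * W) * diagonal (fun i => (θ i : ℂ)) := by
    simp only [conjDiagonal, Matrix.mul_sub, Matrix.sub_mul, ← Matrix.mul_assoc,
      mem_unitaryGroup_iff'.mp hV, Matrix.one_mul]
    simp only [Matrix.mul_assoc, mem_unitaryGroup_iff'.mp hW, Matrix.mul_one]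
  ext i j
  simp [hcommutator, diagonal_mul, mul_diagonal, sub_mul, mul_comm]

lemma norm_conjDiagonal_comp_sub_le {V W : Matrix n n ℂ} (hV : V ∈ unitaryGroup n ℂ)
    (hW : W ∈ unitaryGroup n ℂ) (ξ θ : n → ℝ) (g : ℝ → ℝ) {L : ℝ} (hL : 0 ≤ L)
    (hg : ∀ i j, |g (ξ i) - g (θ j)| ≤ L * |ξ i - θ j|) :
    ‖conjDiagonal V (g ∘ ξ) - conjDiagonal W (g ∘ θ)‖
      ≤ L * ‖conjDiagonal V ξ - conjDiagonal W θ‖ := by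
  have hnorm (X : Matrix n n ℂ) : ‖star V * X * W‖ = ‖X‖ := by
    rw [frobenius_norm_mul_unitary hW, frobenius_norm_unitary_mul (Unitary.star_mem hV)]
  rw [← hnorm, ← hnorm (conjDiagonal V ξ - _), star_mul_conjDiagonal_sub_mul hV hW,
    star_mul_conjDiagonal_sub_mul hV hW]
  refine frobenius_norm_le_of_norm_entry_le hL fun i j => ?_
  simp only [of_apply, norm_mul, Complex.norm_real, Real.norm_eq_abs, ← mul_assoc]
  exact mul_le_mul_of_nonneg_right (hg i j) (norm_nonneg _)

lemma aeval_conjDiagonal {V : Matrix n n ℂ} (hV : V ∈ unitaryGroup n ℂ) (ξ : n → ℝ)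
    (p : Polynomial ℝ) : Polynomial.aeval (conjDiagonal V ξ) p
      = conjDiagonal V (fun i => p.eval (ξ i)) := by
  have h (η : n → ℝ) : conjDiagonal V η = Unitary.conjStarAlgAut ℝ _ ⟨V, hV⟩
      (diagonalAlgHom ℝ (fun i => algebraMap ℝ ℂ (η i))) := rfl
  rw [h, h, Polynomial.aeval_algHom_apply, Polynomial.aeval_algHom_apply,
    Polynomial.aeval_pi_apply]
  simp only [Polynomial.aeval_algebraMap_apply, Polynomial.coe_aeval_eq_eval]

lemma submatrix_mem_unitaryGroup {R : Type*} [CommRing R] [StarRing R] {V : Matrix n n R}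
    (hV : V ∈ unitaryGroup n R) (σ : n ≃ n) : V.submatrix id σ ∈ unitaryGroup n R := by
  rw [mem_unitaryGroup_iff, star_eq_conjTranspose, conjTranspose_submatrix, submatrix_mul_equiv,
    submatrix_id_id, ← star_eq_conjTranspose, mem_unitaryGroup_iff.mp hV]

lemma conjDiagonal_submatrix (V : Matrix n n ℂ) (ξ : n → ℝ) (σ : n ≃ n) :
    conjDiagonal (V.submatrix id σ) (ξ ∘ σ) = conjDiagonal V ξ := by
  have hD : diagonal (fun i => ((ξ ∘ σ) i : ℂ)) = (diagonal fun i => (ξ i : ℂ)).submatrix σ σ :=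
    (submatrix_diagonal_equiv (fun i => (ξ i : ℂ)) σ).symm
  rw [conjDiagonal, conjDiagonal, hD, star_eq_conjTranspose, conjTranspose_submatrix,
    submatrix_mul_equiv, submatrix_mul_equiv, submatrix_id_id, star_eq_conjTranspose]

end ConjDiagonal

/-- Bundled linearly in the coefficient matrix `c` as well, so that sums of coefficient matrices
can be pulled out. -/
noncomputable def hadamardConj (U : Matrix n n ℂ) :
    (n → n → ℝ) →ₗ[ℝ] Matrix n n ℂ →L[ℝ] Matrix n n ℂ :=
  LinearMap.toContinuousLinearMap.toLinearMap ∘ₗ LinearMap.mk₂ ℝ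
    (fun c E => U * (of fun i j => (c i j : ℂ) * (star U * E * U) i j) * star U)
    (fun c c' E => by
      rw [← Matrix.add_mul, ← Matrix.mul_add]; congr 2; ext; simp [add_mul])
    (fun a c E => by
      rw [← Matrix.smul_mul, ← Matrix.mul_smul]; congr 2; ext
      simp [Complex.real_smul, mul_assoc])
    (fun c E E' => by
      rw [← Matrix.add_mul, ← Matrix.mul_add]; congr 2; ext
      simp [Matrix.add_mul, mul_add])
    (fun a c E => by
      rw [← Matrix.smul_mul, ← Matrix.mul_smul]; congr 2; ext
      simp [Complex.real_smul, mul_left_comm])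

lemma hadamardConj_apply (U : Matrix n n ℂ) (c : n → n → ℝ) (E : Matrix n n ℂ) :
    hadamardConj U c E = U * (of fun i j => (c i j : ℂ) * (star U * E * U) i j) * star U :=
  rfl

lemma norm_hadamardConj_apply_le [DecidableEq n] {U : Matrix n n ℂ}
    (hU : U ∈ unitaryGroup n ℂ) {c : n → n → ℝ} {C : ℝ} (hC : 0 ≤ C) (hc : ∀ i j, |c i j| ≤ C)
    (E : Matrix n n ℂ) :
    ‖hadamardConj U c E‖ ≤ C * ‖E‖ := by
  rw [hadamardConj_apply, frobenius_norm_mul_unitary (Unitary.star_mem hU),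
    frobenius_norm_unitary_mul hU, ← frobenius_norm_mul_unitary hU E,
    ← frobenius_norm_unitary_mul (Unitary.star_mem hU) (E * U), ← Matrix.mul_assoc]
  refine frobenius_norm_le_of_norm_entry_le hC fun i j => ?_
  rw [of_apply, norm_mul, Complex.norm_real, Real.norm_eq_abs]
  exact mul_le_mul_of_nonneg_right (hc i j) (norm_nonneg _)

lemma conjDiagonal_mul_mul_conjDiagonal [DecidableEq n] (U : Matrix n n ℂ) (a b : n → ℝ)
    (E : Matrix n n ℂ) :
    conjDiagonal U a * E * conjDiagonal U b = hadamardConj U (fun i j => a i * b j) E := by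
  calc conjDiagonal U a * E * conjDiagonal U b
      = U * (diagonal (fun i => (a i : ℂ)) * (star U * E * U) * diagonal (fun i => (b i : ℂ)))
          * star U := by
        simp only [conjDiagonal, Matrix.mul_assoc]
    _ = hadamardConj U (fun i j => a i * b j) E := by
        rw [hadamardConj_apply]
        congr 2
        ext i j
        simp only [diagonal_mul, mul_diagonal, of_apply, Complex.ofReal_mul]
        ring

end Matrix

/-- Mathlib's `IsHermitian.eigenvalues` are indexed through an arbitrary equivalence
`Fin (Fintype.card (Fin d)) ≃ Fin d`, hence unsorted; they are sorted here, decreasingly. -/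
lemma Matrix.IsHermitian.exists_antitone_conjDiagonal {d : ℕ} {B : Matrix (Fin d) (Fin d) ℂ}
    (hB : B.IsHermitian) : ∃ V ∈ unitaryGroup (Fin d) ℂ, ∃ ξ : Fin d → ℝ,
      Antitone ξ ∧ B = conjDiagonal V ξ := by
  set σ : Equiv.Perm (Fin d) := Fin.revPerm.trans (Tuple.sort hB.eigenvalues)
  refine ⟨_, submatrix_mem_unitaryGroup hB.eigenvectorUnitary.2 σ, hB.eigenvalues ∘ σ,
    fun i j hij => Tuple.monotone_sort _ (Fin.rev_le_rev.mpr hij), ?_⟩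
  rw [conjDiagonal_submatrix]
  exact hB.spectral_theorem

section PolynomialApproximation

open Polynomial

lemma Polynomial.exists_derivative_eq {K : Type*} [Field K] [CharZero K] (q : K[X]) :
    ∃ p : K[X], derivative p = q := by
  induction q using Polynomial.induction_on' with
  | add q r hq hr =>
    obtain ⟨P, rfl⟩ := hq
    obtain ⟨Q, rfl⟩ := hr
    exact ⟨P + Q, map_add _ _ _⟩
  | monomial k a =>
    refine ⟨monomial (k + 1) (a / (k + 1)), ?_⟩
    rw [derivative_monomial, Nat.add_sub_cancel]
    push_cast
    rw [div_mul_cancel₀ _ (Nat.cast_add_one_ne_zero k)]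

lemma ContDiff.exists_polynomial_abs_deriv_sub_le {f : ℝ → ℝ} (hf : ContDiff ℝ 1 f) (a b : ℝ)
    {ε : ℝ} (hε : 0 < ε) :
    ∃ p : ℝ[X], ∀ x ∈ Set.Icc a b, |deriv (fun y => f y - p.eval y) x| ≤ ε := by
  obtain ⟨q, hq⟩ := exists_polynomial_near_of_continuousOn a b (deriv f)
    (hf.continuous_deriv le_rfl).continuousOn ε hε
  obtain ⟨p, rfl⟩ := q.exists_derivative_eq
  refine ⟨p, fun x hx => ?_⟩
  rw [deriv_fun_sub (hf.differentiable one_ne_zero x) p.differentiableAt, Polynomial.deriv,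
    abs_sub_comm]
  exact (hq x hx).le

end PolynomialApproximation

section DivDiff

open Finset

variable {d : ℕ}

lemma divDiff_add {f g : ℝ → ℝ} (hf : Differentiable ℝ f) (hg : Differentiable ℝ g)
    (α : Fin d → ℝ) : divDiff (fun x => f x + g x) α = divDiff f α + divDiff g α := by
  ext m n
  simp only [divDiff, Pi.add_apply]
  split_ifs
  · exact deriv_fun_add (hf _) (hg _)
  · ring

lemma divDiff_const_mul (a : ℝ) (f : ℝ → ℝ) (α : Fin d → ℝ) :
    divDiff (fun x => a * f x) α = a • divDiff f α := by
  ext m n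
  simp only [divDiff, Pi.smul_apply, smul_eq_mul, deriv_const_mul_field']
  split_ifs
  · rfl
  · ring

lemma divDiff_pow (k : ℕ) (α : Fin d → ℝ) (m n : Fin d) :
    divDiff (· ^ k) α m n = ∑ i ∈ range k, α m ^ i * α n ^ (k - 1 - i) := by
  unfold divDiff
  split_ifs with h
  · rw [← h, geom_sum₂_self]
    simp
  · exact (geom₂_sum h k).symm

lemma abs_divDiff_le {g : ℝ → ℝ} (hg : Differentiable ℝ g) {K : Set ℝ} (hK : Convex ℝ K)
    {C : ℝ} (hC : ∀ x ∈ K, |deriv g x| ≤ C) {α : Fin d → ℝ} (hα : ∀ i, α i ∈ K) (m n : Fin d) :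
    |divDiff g α m n| ≤ C := by
  unfold divDiff
  split_ifs with h
  · exact hC _ (hα m)
  · rw [abs_div, div_le_iff₀ (abs_pos.mpr (sub_ne_zero.mpr h))]
    simpa [Real.norm_eq_abs] using
      hK.norm_image_sub_le_of_norm_deriv_le (fun x _ => hg x) hC (hα n) (hα m)

end DivDiff

section PolynomialDerivative

attribute [local instance] Matrix.frobeniusNormedRing Matrix.frobeniusNormedAlgebra

open Finset Polynomial

variable {d : ℕ} {U : Matrix (Fin d) (Fin d) ℂ}

lemma hasFDerivAt_pow_conjDiagonal (hU : U ∈ unitaryGroup (Fin d) ℂ) (α : Fin d → ℝ) (k : ℕ) :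
    HasFDerivAt (fun B : Matrix (Fin d) (Fin d) ℂ => B ^ k)
      (hadamardConj U (divDiff (· ^ k) α)) (conjDiagonal U α) := by
  have hpow (j : ℕ) : conjDiagonal U α ^ j = conjDiagonal U (fun i => α i ^ j) := by
    simpa using aeval_conjDiagonal hU α (X ^ j)
  have hdiv : divDiff (· ^ k) α = ∑ i ∈ range k, fun m n => α m ^ (k - 1 - i) * α n ^ i := by
    ext m n
    rw [divDiff_pow, geom_sum₂_comm, Finset.sum_apply, Finset.sum_apply]
    simp [mul_comm]
  refine (hasFDerivAt_pow' (𝕜 := ℝ) k (x := conjDiagonal U α)).congr_fderiv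
    (ContinuousLinearMap.ext fun E => ?_)
  simp only [hpow, Nat.pred_eq_sub_one, _root_.sum_apply, _root_.smul_apply,
    ContinuousLinearMap.id_apply, smul_eq_mul, MulOpposite.smul_eq_mul_unop, MulOpposite.unop_op,
    conjDiagonal_mul_mul_conjDiagonal, hdiv, map_sum]
  exact (_root_.sum_apply ..).symm

lemma hasFDerivAt_aeval_conjDiagonal (hU : U ∈ unitaryGroup (Fin d) ℂ) (α : Fin d → ℝ)
    (p : ℝ[X]) : HasFDerivAt (fun B : Matrix (Fin d) (Fin d) ℂ => aeval B p)
      (hadamardConj U (divDiff (fun x => p.eval x) α)) (conjDiagonal U α) := by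
  induction p using Polynomial.induction_on' with
  | add p q hp hq =>
    simp only [map_add, eval_add]
    rw [divDiff_add p.differentiable q.differentiable, map_add]
    exact hp.add hq
  | monomial k a =>
    simp only [aeval_monomial, ← Algebra.smul_def, eval_monomial, divDiff_const_mul, map_smul]
    exact (hasFDerivAt_pow_conjDiagonal hU α k).const_smul a

end PolynomialDerivative

section Remainder

open Polynomial

variable {d : ℕ} {U V : Matrix (Fin d) (Fin d) ℂ} {α ξ : Fin d → ℝ}

noncomputable def firstOrderRemainder (g : ℝ → ℝ) (U : Matrix (Fin d) (Fin d) ℂ) (α : Fin d → ℝ)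
    (V : Matrix (Fin d) (Fin d) ℂ) (ξ : Fin d → ℝ) : Matrix (Fin d) (Fin d) ℂ :=
  conjDiagonal V (g ∘ ξ) - conjDiagonal U (g ∘ α)
    - hadamardConj U (divDiff g α) (conjDiagonal V ξ - conjDiagonal U α)

lemma firstOrderRemainder_add {f g : ℝ → ℝ} (hf : Differentiable ℝ f)
    (hg : Differentiable ℝ g) :
    firstOrderRemainder (fun x => f x + g x) U α V ξ
      = firstOrderRemainder f U α V ξ + firstOrderRemainder g U α V ξ := by
  have hcomp (θ : Fin d → ℝ) : (fun x => f x + g x) ∘ θ = f ∘ θ + g ∘ θ := rfl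
  simp only [firstOrderRemainder, hcomp, conjDiagonal_add, divDiff_add hf hg, map_add,
    _root_.add_apply]
  abel

lemma firstOrderRemainder_polynomial (hU : U ∈ unitaryGroup (Fin d) ℂ)
    (hV : V ∈ unitaryGroup (Fin d) ℂ) (p : ℝ[X]) :
    firstOrderRemainder (fun x => p.eval x) U α V ξ
      = aeval (conjDiagonal V ξ) p - aeval (conjDiagonal U α) p
        - hadamardConj U (divDiff (fun x => p.eval x) α)
            (conjDiagonal V ξ - conjDiagonal U α) := by
  rw [aeval_conjDiagonal hV, aeval_conjDiagonal hU]
  rfl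

lemma norm_firstOrderRemainder_le (hU : U ∈ unitaryGroup (Fin d) ℂ)
    (hV : V ∈ unitaryGroup (Fin d) ℂ) {g : ℝ → ℝ} (hg : Differentiable ℝ g) {K : Set ℝ}
    (hK : Convex ℝ K) {ε : ℝ} (hε : 0 ≤ ε) (hgK : ∀ x ∈ K, |deriv g x| ≤ ε)
    (hαK : ∀ i, α i ∈ K) (hξK : ∀ i, ξ i ∈ K) :
    ‖firstOrderRemainder g U α V ξ‖ ≤ 2 * ε * ‖conjDiagonal V ξ - conjDiagonal U α‖ := by
  have hlip (i j : Fin d) : |g (ξ i) - g (α j)| ≤ ε * |ξ i - α j| := by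
    simpa [Real.norm_eq_abs] using
      hK.norm_image_sub_le_of_norm_deriv_le (fun x _ => hg x) hgK (hαK j) (hξK i)
  calc ‖firstOrderRemainder g U α V ξ‖
      ≤ ‖conjDiagonal V (g ∘ ξ) - conjDiagonal U (g ∘ α)‖
        + ‖hadamardConj U (divDiff g α) (conjDiagonal V ξ - conjDiagonal U α)‖ :=
        norm_sub_le _ _
    _ ≤ ε * ‖conjDiagonal V ξ - conjDiagonal U α‖
          + ε * ‖conjDiagonal V ξ - conjDiagonal U α‖ :=
        add_le_add (norm_conjDiagonal_comp_sub_le hV hU ξ α g hε hlip)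
          (norm_hadamardConj_apply_le hU hε (abs_divDiff_le hg hK hgK hαK) _)
    _ = 2 * ε * ‖conjDiagonal V ξ - conjDiagonal U α‖ := by ring

end Remainder

open Topology in
theorem hasFDerivWithinAt_hadamardConj_divDiff {d : ℕ} {U : Matrix (Fin d) (Fin d) ℂ}
    {α : Fin d → ℝ} {f : ℝ → ℝ} (hf : ContDiff ℝ 1 f)
    {Lf : Matrix (Fin d) (Fin d) ℂ → Matrix (Fin d) (Fin d) ℂ}
    (hLf : ∀ (B V : Matrix (Fin d) (Fin d) ℂ) (ξ : Fin d → ℝ), V ∈ unitaryGroup (Fin d) ℂ →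
      Antitone ξ → B = conjDiagonal V ξ → Lf B = conjDiagonal V (f ∘ ξ))
    (hU : U ∈ unitaryGroup (Fin d) ℂ) (hα : Antitone α) :
    HasFDerivWithinAt Lf (hadamardConj U (divDiff f α)) {B | B.IsHermitian}
      (conjDiagonal U α) := by
  set A := conjDiagonal U α
  refine .of_isLittleO <| Asymptotics.isLittleO_iff.mpr fun c hc => ?_
  set a := ‖A‖ + 1
  have hε : 0 < c / 3 := by positivity
  obtain ⟨p, hp⟩ := hf.exists_polynomial_abs_deriv_sub_le (-a) a hε
  have hpoly := ((hasFDerivAt_aeval_conjDiagonal hU α p).hasFDerivWithinAt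
    (s := {B | B.IsHermitian})).isLittleO.def hε
  have hnear : ∀ᶠ B in 𝓝[{B | B.IsHermitian}] A, ‖B - A‖ ≤ 1 :=
    nhdsWithin_le_nhds <| Filter.mem_of_superset (Metric.closedBall_mem_nhds A one_pos)
      fun B hB => by rwa [Metric.mem_closedBall, dist_eq_norm] at hB
  filter_upwards [hpoly, hnear, self_mem_nhdsWithin] with B hBp hBA hB
  obtain ⟨V, hV, ξ, hξ, rfl⟩ := hB.exists_antitone_conjDiagonal
  have hspec {W : Matrix (Fin d) (Fin d) ℂ} (hW : W ∈ unitaryGroup (Fin d) ℂ) (η : Fin d → ℝ)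
      (h : ‖conjDiagonal W η‖ ≤ a) (i : Fin d) : η i ∈ Set.Icc (-a) a :=
    abs_le.mp ((abs_le_norm_conjDiagonal hW η i).trans h)
  have hBa : ‖conjDiagonal V ξ‖ ≤ a := by
    calc ‖conjDiagonal V ξ‖ ≤ ‖A‖ + ‖conjDiagonal V ξ - A‖ := norm_le_insert' _ _
      _ ≤ a := by linarith
  have hg : Differentiable ℝ fun x => f x - p.eval x :=
    (hf.differentiable one_ne_zero).sub p.differentiable
  have hsplit := firstOrderRemainder_add (U := U) (α := α) (V := V) (ξ := ξ) p.differentiable hg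
  rw [show (fun x => p.eval x + (f x - p.eval x)) = f by funext; ring,
    firstOrderRemainder_polynomial hU hV] at hsplit
  rw [hLf _ V ξ hV hξ rfl, hLf A U α hU hα rfl]
  change ‖firstOrderRemainder f U α V ξ‖ ≤ _
  rw [hsplit]
  calc _ ≤ c / 3 * ‖conjDiagonal V ξ - A‖ + 2 * (c / 3) * ‖conjDiagonal V ξ - A‖ :=
        norm_add_le_of_le hBp (norm_firstOrderRemainder_le hU hV hg (convex_Icc _ _) hε.le hp
          (hspec hU α (by linarith)) (hspec hV ξ hBa))
    _ = c * ‖conjDiagonal V ξ - A‖ := by ring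

theorem daleskii_krein_general {d : ℕ}
    (f : ℝ → ℝ) (hf : ContDiff ℝ 1 f)
    (A U : Matrix (Fin d) (Fin d) ℂ) (α : Fin d → ℝ)
    (Lf : Matrix (Fin d) (Fin d) ℂ → Matrix (Fin d) (Fin d) ℂ)
    (hU : U ∈ Matrix.unitaryGroup (Fin d) ℂ)
    (hα : Antitone α)
    (hAdec : A = U * Matrix.diagonal (fun i => (α i : ℂ)) * star U)
    -- `Lf` is the scalar matrix function `𝓛_f` determined by spectral decompositions:
    (hLf : ∀ (B V : Matrix (Fin d) (Fin d) ℂ) (ξ : Fin d → ℝ),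
      V ∈ Matrix.unitaryGroup (Fin d) ℂ → Antitone ξ →
      B = V * Matrix.diagonal (fun i => (ξ i : ℂ)) * star V →
      Lf B = V * Matrix.diagonal (fun i => (f (ξ i) : ℂ)) * star V) :
    ∃ L : Matrix (Fin d) (Fin d) ℂ →L[ℝ] Matrix (Fin d) (Fin d) ℂ,
      HasFDerivWithinAt Lf L {B | B.IsHermitian} A ∧
      ∀ E : Matrix (Fin d) (Fin d) ℂ, E.IsHermitian →
        L E = U * (Matrix.of fun m n =>
            (divDiff f α m n : ℂ) * (star U * E * U) m n) * star U := by
  subst hAdec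
  exact ⟨hadamardConj U (divDiff f α), hasFDerivWithinAt_hadamardConj_divDiff hf hLf hU hα,
    fun E _ => rfl⟩

/-- **Daleskii–Krein theorem.**
Let `f : ℝ → ℝ` be C¹ and let `A = U Λ_α U*` be Hermitian with
non-increasingly ordered eigenvalue vector `α` and unitary `U`.  Then the
scalar matrix function `𝓛_f` (applying `f` to each eigenvalue) is Fréchet
differentiable at `A` (as a map between the real normed spaces of Hermitian
matrices), and for every Hermitian `E`, with `Ê = U* E U`,
`𝓛_f'(E) = U ([f,α] ∘ Ê) U*` where `∘` is the Hadamard product. -/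
theorem daleskii_krein {d : ℕ}
    (f : ℝ → ℝ) (hf : ContDiff ℝ 1 f)
    (A U : Matrix (Fin d) (Fin d) ℂ) (α : Fin d → ℝ)
    (Lf : Matrix (Fin d) (Fin d) ℂ → Matrix (Fin d) (Fin d) ℂ)
    (hA : A.IsHermitian)
    (hU : U ∈ Matrix.unitaryGroup (Fin d) ℂ)
    (hα : Antitone α)
    (hAdec : A = U * Matrix.diagonal (fun i => (α i : ℂ)) * star U)
    -- `Lf` is the scalar matrix function `𝓛_f` determined by spectral decompositions:
    (hLf : ∀ (B V : Matrix (Fin d) (Fin d) ℂ) (ξ : Fin d → ℝ),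
      V ∈ Matrix.unitaryGroup (Fin d) ℂ → Antitone ξ →
      B = V * Matrix.diagonal (fun i => (ξ i : ℂ)) * star V →
      Lf B = V * Matrix.diagonal (fun i => (f (ξ i) : ℂ)) * star V) :
    ∃ L : Matrix (Fin d) (Fin d) ℂ →L[ℝ] Matrix (Fin d) (Fin d) ℂ,
      HasFDerivWithinAt Lf L {B | B.IsHermitian} A ∧
      ∀ E : Matrix (Fin d) (Fin d) ℂ, E.IsHermitian →
        L E = U * (Matrix.of fun m n =>
            (divDiff f α m n : ℂ) * (star U * E * U) m n) * star U :=
  daleskii_krein_general f hf A U α Lf hU hα hAdec hLf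
end

section
/- Let α ∈ ℝ^d_≥ and let F : ℝ^d_≥ → ℝ^d be a C¹ point-symmetric vector field at α. Let E_{m,m} be the d×d matrix with a 1 in entry (m,m) and zeros elsewhere, and e_m the m-th standard basis vector. Then the one-sided Gateaux derivative of 𝓛_F at the diagonal matrix Λ_α in direction E_{m,m} exists and equals diag( (F^ext)'|_α e_m ), i.e. lim_{h→0} (𝓛_F(Λ_α + h E_{m,m}) − 𝓛_F(Λ_α))/h = diag( (F^ext)'|_α e_m ). -/
open Matrix Filter

attribute [local instance] Matrix.frobeniusNormedAddCommGroup Matrix.frobeniusNormedSpace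

/-! Sorting a real vector is conjugation of its diagonal matrix by a permutation matrix, so on
real diagonal matrices `𝓛_F` acts as `F^ext` on the diagonal. The perturbation `Λ_α + h E_{m,m}`
stays diagonal, so the difference quotient of `𝓛_F` is the diagonal matrix of the difference
quotient of `F^ext` along `e_m`, which tends to `(F^ext)'|_α e_m`. -/

namespace Matrix

variable {n R : Type*} [DecidableEq n]

theorem permMatrix_mem_unitaryGroup [Fintype n] [CommRing R] [StarRing R] (σ : Equiv.Perm n) :
    σ.permMatrix R ∈ unitaryGroup n R := by
  rw [mem_unitaryGroup_iff, star_eq_conjTranspose, conjTranspose_permMatrix, ← permMatrix_mul,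
    inv_mul_cancel, permMatrix_one]

theorem permMatrix_mul_diagonal_mul_star [Fintype n] [CommRing R] [StarRing R] (σ : Equiv.Perm n)
    (v : n → R) :
    σ.permMatrix R * diagonal v * star (σ.permMatrix R) = diagonal (v ∘ σ) := by
  rw [star_eq_conjTranspose, conjTranspose_permMatrix, PEquiv.toMatrix_toPEquiv_mul,
    PEquiv.mul_toMatrix_toPEquiv]
  ext i j
  simp [diagonal_apply, Equiv.Perm.inv_def]

theorem diagonal_ofReal_add_smul_single (v : n → ℝ) (t : ℝ) (m : n) :
    diagonal (fun i => (v i : ℂ)) + t • single m m (1 : ℂ)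
      = diagonal (fun i => ((v + t • (Pi.single m 1 : n → ℝ)) i : ℂ)) := by
  rw [← diagonal_single, ← diagonal_smul, diagonal_add]
  congr 1
  funext i
  rcases eq_or_ne i m with rfl | him <;> simp [*]

theorem ofReal_inv_smul_diagonal_sub (t : ℝ) (a b : n → ℝ) :
    (t : ℂ)⁻¹ • (diagonal (fun i => (a i : ℂ)) - diagonal (fun i => (b i : ℂ)))
      = diagonal (fun i => ((t⁻¹ • (a - b)) i : ℂ)) := by
  ext i j
  by_cases h : i = j <;> simp [h]

end Matrix

theorem matrixFunction_diagonal_ofReal {n : Type*} [Fintype n] [DecidableEq n] [Preorder n]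
    {F Fext : (n → ℝ) → n → ℝ} {LF : Matrix n n ℂ → Matrix n n ℂ}
    (hFext : ∀ x : n → ℝ, ∃ σ : Equiv.Perm n,
      Antitone (x ∘ σ) ∧ Fext x = F (x ∘ σ) ∘ σ.symm)
    (hLF : ∀ (B V : Matrix n n ℂ) (ξ : n → ℝ),
      V ∈ Matrix.unitaryGroup n ℂ → Antitone ξ →
      B = V * Matrix.diagonal (fun i => (ξ i : ℂ)) * star V →
      LF B = V * Matrix.diagonal (fun i => (F ξ i : ℂ)) * star V)
    (x : n → ℝ) :
    LF (diagonal fun i => (x i : ℂ)) = diagonal fun i => (Fext x i : ℂ) := by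
  obtain ⟨σ, hsorted, hFext_x⟩ := hFext x
  have hconj : diagonal (fun i => (x i : ℂ))
      = (σ⁻¹).permMatrix ℂ * diagonal (fun i => ((x ∘ σ) i : ℂ))
          * star ((σ⁻¹).permMatrix ℂ) := by
    rw [permMatrix_mul_diagonal_mul_star]
    simp [Function.comp_def]
  rw [hLF _ _ _ (permMatrix_mem_unitaryGroup _) hsorted hconj, permMatrix_mul_diagonal_mul_star,
    hFext_x]
  rfl

theorem LF_gateaux_diagonal_general {d : ℕ}
    (F Fext : (Fin d → ℝ) → Fin d → ℝ) (α : Fin d → ℝ)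
    (LF : Matrix (Fin d) (Fin d) ℂ → Matrix (Fin d) (Fin d) ℂ)
    (D : (Fin d → ℝ) →L[ℝ] (Fin d → ℝ)) (m : Fin d)
    -- `Fext` is the extension `F^ext` of `F`, obtained by sorting the argument:
    (hFext : ∀ x : Fin d → ℝ, ∃ σ : Equiv.Perm (Fin d),
      Antitone (x ∘ σ) ∧ Fext x = F (x ∘ σ) ∘ σ.symm)
    (hD : HasFDerivAt Fext D α)
    -- `LF` is the matrix function `𝓛_F` determined by spectral decompositions:
    (hLF : ∀ (B V : Matrix (Fin d) (Fin d) ℂ) (ξ : Fin d → ℝ),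
      V ∈ Matrix.unitaryGroup (Fin d) ℂ → Antitone ξ →
      B = V * Matrix.diagonal (fun i => (ξ i : ℂ)) * star V →
      LF B = V * Matrix.diagonal (fun i => (F ξ i : ℂ)) * star V) :
    Tendsto
      (fun h : ℝ => (h : ℂ)⁻¹ •
        (LF (Matrix.diagonal (fun i => (α i : ℂ)) + h • Matrix.single m m (1 : ℂ))
          - LF (Matrix.diagonal (fun i => (α i : ℂ)))))
      (nhdsWithin (0 : ℝ) {0}ᶜ)
      (nhds (Matrix.diagonal fun i => (D (Pi.single m 1) i : ℂ))) := by
  have hslope := (hD.hasLineDerivAt (Pi.single m 1)).tendsto_slope_zero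
  have hdiag : Continuous fun v : Fin d → ℝ => diagonal fun i => (v i : ℂ) :=
    Continuous.matrix_diagonal (by fun_prop)
  refine ((hdiag.tendsto _).comp hslope).congr fun h => ?_
  rw [diagonal_ofReal_add_smul_single, matrixFunction_diagonal_ofReal hFext hLF,
    matrixFunction_diagonal_ofReal hFext hLF, ofReal_inv_smul_diagonal_sub]
  rfl

/-- **Lemma (diagonal Gateaux derivatives of `𝓛_F`).**
If `F : ℝ^d_≥ → ℝ^d` is C¹ point-symmetric at `α` (its extension `F^ext` is
point-symmetric and C¹ at `α`, with derivative `D`), then the Gateaux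
derivative of `𝓛_F` at `Λ_α` in the direction `E_{m,m}` exists and equals
`diag((F^ext)'|_α e_m)`, i.e.
`lim_{h→0} (𝓛_F(Λ_α + h E_{m,m}) − 𝓛_F(Λ_α))/h = diag((F^ext)'|_α e_m)`. -/
theorem LF_gateaux_diagonal {d : ℕ}
    (F Fext : (Fin d → ℝ) → Fin d → ℝ) (α : Fin d → ℝ)
    (LF : Matrix (Fin d) (Fin d) ℂ → Matrix (Fin d) (Fin d) ℂ)
    (D : (Fin d → ℝ) →L[ℝ] (Fin d → ℝ)) (m : Fin d)
    (hα : Antitone α)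
    -- `Fext` is the extension `F^ext` of `F`, obtained by sorting the argument:
    (hFext : ∀ x : Fin d → ℝ, ∃ σ : Equiv.Perm (Fin d),
      Antitone (x ∘ σ) ∧ Fext x = F (x ∘ σ) ∘ σ.symm)
    -- `F` is C¹ point-symmetric at `α`:
    (hsym : ∀ (x : Fin d → ℝ) (σ : Equiv.Perm (Fin d)), Fext (x ∘ σ) = Fext x ∘ σ)
    (hC1 : ContDiffAt ℝ 1 Fext α)
    (hD : HasFDerivAt Fext D α)
    -- `LF` is the matrix function `𝓛_F` determined by spectral decompositions:
    (hLF : ∀ (B V : Matrix (Fin d) (Fin d) ℂ) (ξ : Fin d → ℝ),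
      V ∈ Matrix.unitaryGroup (Fin d) ℂ → Antitone ξ →
      B = V * Matrix.diagonal (fun i => (ξ i : ℂ)) * star V →
      LF B = V * Matrix.diagonal (fun i => (F ξ i : ℂ)) * star V) :
    Tendsto
      (fun h : ℝ => (h : ℂ)⁻¹ •
        (LF (Matrix.diagonal (fun i => (α i : ℂ)) + h • Matrix.single m m (1 : ℂ))
          - LF (Matrix.diagonal (fun i => (α i : ℂ)))))
      (nhdsWithin (0 : ℝ) {0}ᶜ)
      (nhds (Matrix.diagonal fun i => (D (Pi.single m 1) i : ℂ))) :=
  LF_gateaux_diagonal_general F Fext α LF D m hFext hD hLF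
end

section
/- Let τ ∈ ℂ with |τ| = 1, let α ∈ ℝ^d_≥, let F : ℝ^d_≥ → ℝ^d be C¹ point-symmetric at α, and let m ≠ n. Then the Gateaux derivative of 𝓛_F at Λ_α in the direction of the Hermitian matrix τE_{m,n} + τ̄E_{n,m} exists and equals [F,α] ∘ (τE_{m,n} + τ̄E_{n,m}), where ∘ denotes Hadamard multiplication and E_{m,n} is the matrix with a 1 in entry (m,n) and zeros elsewhere. -/
/-!
Write `E = τ E_{mn} + τ̄ E_{nm}`. The matrix `Λ_α + h E` differs from `Λ_α` only in the `(m, n)`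
block, where it is diagonalised by a plane rotation through an angle `φ(h) / 2`, with eigenvalues
`α + ρ(h) (e_m - e_n)`. Hence `𝓛_F(Λ_α + h E)` is the same rotation applied to
`diag F^ext(α + ρ(h) (e_m - e_n))`, and the chain rule gives its derivative at `h = 0`.
If `α_m ≠ α_n`, then `φ(h) = arctan (2h / (α_m - α_n))` and the eigenvalues move only to second
order, so only the turning of the rotation contributes, with the divided difference as factor.
If `α_m = α_n`, then `φ = π / 2` and `ρ(h) = h`, so the derivative is the rotation through `π / 4`
applied to `diag D(e_m - e_n)`; the symmetry of `F^ext` under swapping `m` and `n` forces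
`D(e_m - e_n) = (∂_m F^ext_m - ∂_m F^ext_n) (e_m - e_n)`, which that rotation turns into a
multiple of `E`.
-/

open Matrix Filter

attribute [local instance] Matrix.frobeniusNormedAddCommGroup Matrix.frobeniusNormedSpace

/-- The matrix `[F,α]` of generalized divided differences, where `D` is the
derivative of the extension `F^ext` at `α`, so that
`D (Pi.single n 1) m = ∂ₙ F^ext_m (α)`. -/
noncomputable def bracket {d : ℕ} (F : (Fin d → ℝ) → Fin d → ℝ)
    (D : (Fin d → ℝ) →L[ℝ] (Fin d → ℝ)) (α : Fin d → ℝ) (m n : Fin d) : ℝ :=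
  if α m = α n then
    if m = n then D (Pi.single m 1) m
    else D (Pi.single m 1) m - D (Pi.single m 1) n
  else (F α m - F α n) / (α m - α n)

namespace GateauxOffDiagonal

variable {ι : Type*}

def IsPermEquivariant (f : (ι → ℝ) → ι → ℝ) : Prop :=
  ∀ (x : ι → ℝ) (σ : Equiv.Perm ι), f (x ∘ σ) = f x ∘ σ

theorem HasFDerivAt.map_comp_perm [Fintype ι] {f : (ι → ℝ) → ι → ℝ}
    {D : (ι → ℝ) →L[ℝ] ι → ℝ} {x : ι → ℝ} (hf : HasFDerivAt f D x)
    (hsym : IsPermEquivariant f) {σ : Equiv.Perm ι} (hx : x ∘ σ = x) (v : ι → ℝ) :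
    D (v ∘ σ) = D v ∘ σ := by
  let P : (ι → ℝ) →L[ℝ] ι → ℝ := (LinearMap.funLeft ℝ ℝ σ).toContinuousLinearMap
  have hPx : P x = x := hx
  have hcomm : f ∘ P = P ∘ f := funext fun y => hsym y σ
  have h1 : HasFDerivAt (f ∘ P) (D.comp P) x := (hPx ▸ hf).comp x P.hasFDerivAt
  have h2 : HasFDerivAt (P ∘ f) (P.comp D) x := P.hasFDerivAt.comp x hf
  exact DFunLike.congr_fun ((hcomm ▸ h1).unique h2) v

variable [DecidableEq ι]

noncomputable def hermSingle (m n : ι) (τ : ℂ) : Matrix ι ι ℂ :=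
  τ • single m n 1 + (starRingEnd ℂ) τ • single n m 1

noncomputable def planeRotation (m n : ι) (τ : ℂ) (c s : ℝ) : Matrix ι ι ℂ :=
  of fun i j =>
    if i = m then (if j = m then (c : ℂ) else if j = n then -s else 0)
    else if i = n then
      (if j = m then (starRingEnd ℂ) τ * s else if j = n then (starRingEnd ℂ) τ * c else 0)
    else if i = j then 1 else 0

theorem of_mul_hermSingle {m n : ι} (hmn : m ≠ n) (τ : ℂ) (b : ι → ι → ℝ)
    (hb : b n m = b m n) :
    of (fun i j => (b i j : ℂ) * hermSingle m n τ i j) = b m n • hermSingle m n τ := by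
  ext i j
  simp only [hermSingle, of_apply, Matrix.add_apply, Matrix.smul_apply, Matrix.single_apply,
    smul_eq_mul, Complex.real_smul]
  split_ifs with h1 h2 h2 <;> simp_all

variable [Fintype ι]

theorem submatrix_id_mem_unitaryGroup {R : Type*} [CommRing R] [StarRing R]
    {V : Matrix ι ι R} (hV : V ∈ unitaryGroup ι R) (σ : Equiv.Perm ι) :
    V.submatrix id σ ∈ unitaryGroup ι R := by
  rw [mem_unitaryGroup_iff, star_eq_conjTranspose, conjTranspose_submatrix,
    ← star_eq_conjTranspose, submatrix_mul_equiv, mem_unitaryGroup_iff.1 hV, submatrix_id_id]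

theorem submatrix_id_mul_diagonal_mul_star {R : Type*} [CommRing R] [StarRing R]
    (V : Matrix ι ι R) (σ : Equiv.Perm ι) (w : ι → R) :
    V.submatrix id σ * diagonal (w ∘ σ) * star (V.submatrix id σ) =
      V * diagonal w * star V := by
  rw [star_eq_conjTranspose, conjTranspose_submatrix, ← star_eq_conjTranspose,
    ← submatrix_diagonal_equiv, submatrix_mul_equiv, submatrix_mul_equiv, submatrix_id_id]

noncomputable def diagOfReal : (ι → ℝ) →L[ℝ] Matrix ι ι ℂ :=
  LinearMap.toContinuousLinearMap
    { toFun := fun ξ => diagonal fun i => (ξ i : ℂ)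
      map_add' := fun ξ η => by ext i j; by_cases h : i = j <;> simp [h]
      map_smul' := fun c ξ => by ext i j; by_cases h : i = j <;> simp [h] }

theorem diagOfReal_apply (ξ : ι → ℝ) : diagOfReal ξ = diagonal fun i => (ξ i : ℂ) := rfl

theorem planeRotation_mul_diagonal_mul_star {m n : ι} (hmn : m ≠ n) {τ : ℂ}
    (hτ : ‖τ‖ = 1) {c s : ℝ} (hcs : c ^ 2 + s ^ 2 = 1) (ξ : ι → ℝ) :
    planeRotation m n τ c s * diagonal (fun i => (ξ i : ℂ)) * star (planeRotation m n τ c s) =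
      diagOfReal ξ + ((ξ m - ξ n) / 2) • ((c ^ 2 - s ^ 2 - 1) •
        diagOfReal (Pi.single m 1 - Pi.single n 1) + (2 * s * c) • hermSingle m n τ) := by
  have hτ' : (starRingEnd ℂ) τ * τ = 1 := by
    rw [mul_comm, Complex.mul_conj, Complex.normSq_eq_norm_sq, hτ]; norm_num
  have hcs' : (c : ℂ) ^ 2 + (s : ℂ) ^ 2 = 1 := by exact_mod_cast hcs
  ext i j
  simp only [hermSingle, diagOfReal_apply, Matrix.add_apply, Matrix.smul_apply, diagonal_apply,
    Matrix.single_apply, Pi.sub_apply, Pi.single_apply, mul_apply, star_apply, planeRotation,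
    of_apply, Complex.real_smul]
  rcases eq_or_ne i m with rfl | him
  · rw [Fintype.sum_eq_add i n hmn (fun k hk => by simp [hk.1, hk.2])]
    rcases eq_or_ne j i with rfl | hjm
    · simp [hmn, hmn.symm]
      linear_combination (ξ j + ξ n : ℂ) / 2 * hcs'
    rcases eq_or_ne j n with rfl | hjn
    · simp [hmn, hmn.symm]
      ring
    · simp [hjm, hjn, hjm.symm, hjn.symm]
  rcases eq_or_ne i n with rfl | hin
  · rw [Fintype.sum_eq_add m i hmn (fun k hk => by simp [hk.1, hk.2, him])]
    rcases eq_or_ne j m with rfl | hjm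
    · simp [hmn, hmn.symm]
      ring
    rcases eq_or_ne j i with rfl | hjn
    · simp [hmn, hmn.symm]
      linear_combination
        ((s : ℂ) ^ 2 * ξ m + (c : ℂ) ^ 2 * ξ j) * hτ' + (ξ m + ξ j : ℂ) / 2 * hcs'
    · simp [hjm, hjn, hjm.symm, hjn.symm, him]
  · rw [Fintype.sum_eq_single i (fun k hk => by simp [him, hin, hk.symm])]
    by_cases hij : i = j
    · subst hij
      simp [him, hin, him.symm, hin.symm]
    · simp [him, hin, him.symm, hin.symm, hij, Ne.symm hij]

theorem planeRotation_mem_unitaryGroup {m n : ι} (hmn : m ≠ n) {τ : ℂ} (hτ : ‖τ‖ = 1)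
    {c s : ℝ} (hcs : c ^ 2 + s ^ 2 = 1) : planeRotation m n τ c s ∈ unitaryGroup ι ℂ := by
  rw [mem_unitaryGroup_iff]
  simpa [diagOfReal_apply] using planeRotation_mul_diagonal_mul_star hmn hτ hcs (fun _ => 1)

/-- On the `(m, n)` block this is `(ξ m + ξ n) / 2 • 1 + (ξ m - ξ n) / 2 • R` with the
reflection `R = [[cos φ, τ sin φ], [τ̄ sin φ, -cos φ]]`; elsewhere it is `diag ξ`. -/
noncomputable def rotatedDiagonal (m n : ι) (τ : ℂ) (φ : ℝ) (ξ : ι → ℝ) :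
    Matrix ι ι ℂ :=
  diagOfReal ξ + ((ξ m - ξ n) / 2) •
    ((Real.cos φ - 1) • diagOfReal (Pi.single m 1 - Pi.single n 1) +
      Real.sin φ • hermSingle m n τ)

theorem rotatedDiagonal_eq_planeRotation_conj {m n : ι} (hmn : m ≠ n) {τ : ℂ}
    (hτ : ‖τ‖ = 1) (φ : ℝ) (ξ : ι → ℝ) :
    rotatedDiagonal m n τ φ ξ =
      planeRotation m n τ (Real.cos (φ / 2)) (Real.sin (φ / 2)) *
        diagonal (fun i => (ξ i : ℂ)) *
        star (planeRotation m n τ (Real.cos (φ / 2)) (Real.sin (φ / 2))) := by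
  have hcos : Real.cos φ = Real.cos (φ / 2) ^ 2 - Real.sin (φ / 2) ^ 2 := by
    rw [← Real.cos_two_mul', mul_div_cancel₀ _ two_ne_zero]
  have hsin : Real.sin φ = 2 * Real.sin (φ / 2) * Real.cos (φ / 2) := by
    rw [← Real.sin_two_mul, mul_div_cancel₀ _ two_ne_zero]
  rw [planeRotation_mul_diagonal_mul_star hmn hτ (Real.cos_sq_add_sin_sq _),
    rotatedDiagonal, hcos, hsin]

theorem diagonal_add_smul_hermSingle_eq_rotatedDiagonal {m n : ι} (hmn : m ≠ n) (τ : ℂ)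
    {α : ι → ℝ} {h φ ρ : ℝ} (hρ : ρ + ((α m - α n) / 2 + ρ) * (Real.cos φ - 1) = 0)
    (hh : ((α m - α n) / 2 + ρ) * Real.sin φ = h) :
    diagonal (fun i => (α i : ℂ)) + h • hermSingle m n τ =
      rotatedDiagonal m n τ φ (α + ρ • (Pi.single m 1 - Pi.single n 1)) := by
  have hgap : ((α + ρ • (Pi.single m 1 - Pi.single n 1) : ι → ℝ) m -
      (α + ρ • (Pi.single m 1 - Pi.single n 1) : ι → ℝ) n) / 2 =
        (α m - α n) / 2 + ρ := by
    simp [hmn, hmn.symm]; ring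
  rw [rotatedDiagonal, hgap, map_add, map_smul, ← diagOfReal_apply, ← hh]
  set Z := diagOfReal (Pi.single m 1 - Pi.single n 1 : ι → ℝ)
  set κ := (α m - α n) / 2 + ρ
  calc diagOfReal α + (κ * Real.sin φ) • hermSingle m n τ
      = diagOfReal α + (ρ + κ * (Real.cos φ - 1)) • Z +
          (κ * Real.sin φ) • hermSingle m n τ := by
        rw [hρ, zero_smul, add_zero]
    _ = _ := by module

theorem hasDerivAt_rotatedDiagonal (m n : ι) (τ : ℂ) {φ : ℝ → ℝ} {w : ℝ → ι → ℝ}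
    {φ' x : ℝ} {w' : ι → ℝ} (hφ : HasDerivAt φ φ' x) (hw : HasDerivAt w w' x) :
    HasDerivAt (fun h => rotatedDiagonal m n τ (φ h) (w h))
      (rotatedDiagonal m n τ (φ x) w' + ((w x m - w x n) / 2 * φ') •
        (Real.cos (φ x) • hermSingle m n τ -
          Real.sin (φ x) • diagOfReal (Pi.single m 1 - Pi.single n 1))) x := by
  have hgap : HasDerivAt (fun h => (w h m - w h n) / 2) ((w' m - w' n) / 2) x :=
    ((hasDerivAt_pi.1 hw m).sub (hasDerivAt_pi.1 hw n)).div_const 2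
  have hdir := ((hφ.cos.sub_const 1).smul_const
    (diagOfReal (Pi.single m 1 - Pi.single n 1 : ι → ℝ))).add
      (hφ.sin.smul_const (hermSingle m n τ))
  refine ((diagOfReal.hasFDerivAt.comp_hasDerivAt x hw).add (hgap.smul hdir)).congr_deriv ?_
  simp only [rotatedDiagonal, Pi.add_apply]
  module

section SpectralFunction

variable {d : ℕ}

def IsSortedExtension (F Fext : (Fin d → ℝ) → Fin d → ℝ) : Prop :=
  ∀ x : Fin d → ℝ, ∃ σ : Equiv.Perm (Fin d),
    Antitone (x ∘ σ) ∧ Fext x = F (x ∘ σ) ∘ σ.symm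

def IsSpectralFunction (LF : Matrix (Fin d) (Fin d) ℂ → Matrix (Fin d) (Fin d) ℂ)
    (F : (Fin d → ℝ) → Fin d → ℝ) : Prop :=
  ∀ (B V : Matrix (Fin d) (Fin d) ℂ) (ξ : Fin d → ℝ),
    V ∈ unitaryGroup (Fin d) ℂ → Antitone ξ →
    B = V * diagonal (fun i => (ξ i : ℂ)) * star V →
    LF B = V * diagonal (fun i => (F ξ i : ℂ)) * star V

variable {F Fext : (Fin d → ℝ) → Fin d → ℝ}
  {LF : Matrix (Fin d) (Fin d) ℂ → Matrix (Fin d) (Fin d) ℂ}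

theorem IsSortedExtension.eq_of_antitone (hFext : IsSortedExtension F Fext)
    (hsym : IsPermEquivariant Fext)
    {ξ : Fin d → ℝ} (hξ : Antitone ξ) : F ξ = Fext ξ := by
  obtain ⟨σ, hσ, hext⟩ := hFext ξ
  have hfix : ξ ∘ σ = ξ := Tuple.unique_antitone (τ := 1) hσ hξ
  calc F ξ = Fext ξ ∘ σ := by rw [hext, hfix]; ext; simp
    _ = Fext ξ := by rw [← hsym, hfix]

theorem IsSpectralFunction.unitary_conj (hLF : IsSpectralFunction LF F)
    (hFext : IsSortedExtension F Fext) {V : Matrix (Fin d) (Fin d) ℂ}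
    (hV : V ∈ unitaryGroup (Fin d) ℂ) (ξ : Fin d → ℝ) :
    LF (V * diagonal (fun i => (ξ i : ℂ)) * star V) =
      V * diagonal (fun i => (Fext ξ i : ℂ)) * star V := by
  obtain ⟨σ, hσ, hext⟩ := hFext ξ
  rw [hLF _ _ _ (submatrix_id_mem_unitaryGroup hV σ) hσ
      (submatrix_id_mul_diagonal_mul_star V σ (fun i => (ξ i : ℂ))).symm, hext,
    ← submatrix_id_mul_diagonal_mul_star V σ]
  simp [Function.comp_def]

theorem IsSpectralFunction.apply_rotatedDiagonal (hLF : IsSpectralFunction LF F)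
    (hFext : IsSortedExtension F Fext) {m n : Fin d} (hmn : m ≠ n) {τ : ℂ} (hτ : ‖τ‖ = 1)
    (φ : ℝ) (ξ : Fin d → ℝ) :
    LF (rotatedDiagonal m n τ φ ξ) = rotatedDiagonal m n τ φ (Fext ξ) := by
  rw [rotatedDiagonal_eq_planeRotation_conj hmn hτ, rotatedDiagonal_eq_planeRotation_conj hmn hτ,
    hLF.unitary_conj hFext (planeRotation_mem_unitaryGroup hmn hτ (Real.cos_sq_add_sin_sq _))]

theorem IsSpectralFunction.hasDerivAt_diagonal_add_smul_hermSingle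
    (hLF : IsSpectralFunction LF F) (hFext : IsSortedExtension F Fext) {m n : Fin d}
    (hmn : m ≠ n) {τ : ℂ} (hτ : ‖τ‖ = 1)
    {α : Fin d → ℝ} {D : (Fin d → ℝ) →L[ℝ] Fin d → ℝ} (hD : HasFDerivAt Fext D α)
    {φ ρ : ℝ → ℝ} {φ' ρ' : ℝ} (hφ : HasDerivAt φ φ' 0) (hρ : HasDerivAt ρ ρ' 0)
    (hρ0 : ρ 0 = 0)
    (hρφ : ∀ h, ρ h + ((α m - α n) / 2 + ρ h) * (Real.cos (φ h) - 1) = 0)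
    (hφh : ∀ h, ((α m - α n) / 2 + ρ h) * Real.sin (φ h) = h) :
    HasDerivAt (fun h : ℝ => LF (diagonal (fun i => (α i : ℂ)) + h • hermSingle m n τ))
      (rotatedDiagonal m n τ (φ 0) (ρ' • D (Pi.single m 1 - Pi.single n 1)) +
        ((Fext α m - Fext α n) / 2 * φ') • (Real.cos (φ 0) • hermSingle m n τ -
          Real.sin (φ 0) • diagOfReal (Pi.single m 1 - Pi.single n 1))) 0 := by
  set u : Fin d → ℝ := Pi.single m 1 - Pi.single n 1
  have hcurve : HasDerivAt (fun h => α + ρ h • u) (ρ' • u) 0 :=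
    (hρ.smul_const u).const_add α
  have hα0 : α + ρ 0 • u = α := by rw [hρ0, zero_smul, add_zero]
  have hw : HasDerivAt (fun h => Fext (α + ρ h • u)) (ρ' • D u) 0 := by
    rw [← map_smul]
    exact (hα0 ▸ hD).comp_hasDerivAt 0 hcurve
  have hLFcurve : (fun h : ℝ => LF (diagonal (fun i => (α i : ℂ)) + h • hermSingle m n τ)) =
      fun h => rotatedDiagonal m n τ (φ h) (Fext (α + ρ h • u)) := by
    funext h
    rw [diagonal_add_smul_hermSingle_eq_rotatedDiagonal hmn τ (hρφ h) (hφh h),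
      hLF.apply_rotatedDiagonal hFext hmn hτ]
  rw [hLFcurve]
  simpa only [hα0] using hasDerivAt_rotatedDiagonal m n τ hφ hw

theorem IsSpectralFunction.hasDerivAt_of_eigenvalue_eq (hLF : IsSpectralFunction LF F)
    (hFext : IsSortedExtension F Fext) (hsym : IsPermEquivariant Fext)
    {m n : Fin d} (hmn : m ≠ n) {τ : ℂ} (hτ : ‖τ‖ = 1) {α : Fin d → ℝ}
    {D : (Fin d → ℝ) →L[ℝ] Fin d → ℝ} (hD : HasFDerivAt Fext D α)
    (hαmn : α m = α n) :
    HasDerivAt (fun h : ℝ => LF (diagonal (fun i => (α i : ℂ)) + h • hermSingle m n τ))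
      (of fun i j => (bracket F D α i j : ℂ) * hermSingle m n τ i j) 0 := by
  set a := D (Pi.single m 1)
  have hswap : D (Pi.single n 1) = a ∘ Equiv.swap m n := by
    rw [← HasFDerivAt.map_comp_perm hD hsym (funext (Equiv.apply_swap_eq_self hαmn))]
    congr 1
    funext k
    simp [Pi.single_apply, Equiv.swap_apply_eq_iff]
  have hu : D (Pi.single m 1 - Pi.single n 1) =
      (a m - a n) • (Pi.single m 1 - Pi.single n 1) := by
    rw [map_sub, hswap]
    funext k
    rcases eq_or_ne k m with rfl | hkm
    · simp [hmn, a]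
    rcases eq_or_ne k n with rfl | hkn
    · simp [hkm, a]
    · simp [hkm, hkn, Equiv.swap_apply_of_ne_of_ne hkm hkn, a]
  have hmn_bracket : bracket F D α m n = a m - a n := by simp [bracket, hαmn, hmn, a]
  have hnm_bracket : bracket F D α n m = a m - a n := by
    simp [bracket, hαmn, hmn.symm, hswap, a]
  rw [of_mul_hermSingle hmn τ _ (hnm_bracket.trans hmn_bracket.symm), hmn_bracket]
  refine (hLF.hasDerivAt_diagonal_add_smul_hermSingle hFext hmn hτ hD
    (hasDerivAt_const 0 (Real.pi / 2)) (hasDerivAt_id 0) rfl (fun h => by simp [hαmn])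
    (fun h => by simp [hαmn])).congr_deriv ?_
  simp [rotatedDiagonal, hu, hmn]
  module

theorem IsSpectralFunction.hasDerivAt_of_eigenvalue_ne (hLF : IsSpectralFunction LF F)
    (hFext : IsSortedExtension F Fext) (hsym : IsPermEquivariant Fext)
    {m n : Fin d} (hmn : m ≠ n) {τ : ℂ} (hτ : ‖τ‖ = 1) {α : Fin d → ℝ}
    (hα : Antitone α) {D : (Fin d → ℝ) →L[ℝ] Fin d → ℝ} (hD : HasFDerivAt Fext D α)
    (hαmn : α m ≠ α n) :
    HasDerivAt (fun h : ℝ => LF (diagonal (fun i => (α i : ℂ)) + h • hermSingle m n τ))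
      (of fun i j => (bracket F D α i j : ℂ) * hermSingle m n τ i j) 0 := by
  set ε := (α m - α n) / 2
  have hε : ε ≠ 0 := div_ne_zero (sub_ne_zero.2 hαmn) two_ne_zero
  set φ : ℝ → ℝ := fun h => Real.arctan (h / ε)
  have hcos : ∀ h, Real.cos (φ h) ≠ 0 := fun h => (Real.cos_arctan_pos _).ne'
  have hφ : HasDerivAt φ ε⁻¹ 0 := by simpa using ((hasDerivAt_id 0).div_const ε).arctan
  have hρ : HasDerivAt (fun h => ε * ((Real.cos (φ h))⁻¹ - 1)) 0 0 := by
    simpa [φ] using ((hφ.cos.inv (hcos 0)).sub_const 1).const_mul ε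
  have hρφ : ∀ h, ε * ((Real.cos (φ h))⁻¹ - 1) +
      (ε + ε * ((Real.cos (φ h))⁻¹ - 1)) * (Real.cos (φ h) - 1) = 0 := fun h => by
    field_simp [hcos h]
    ring
  have hφh : ∀ h, (ε + ε * ((Real.cos (φ h))⁻¹ - 1)) * Real.sin (φ h) = h := fun h => by
    calc (ε + ε * ((Real.cos (φ h))⁻¹ - 1)) * Real.sin (φ h)
        = ε * (Real.sin (φ h) / Real.cos (φ h)) := by field_simp [hcos h]; ring
      _ = h := by rw [← Real.tan_eq_sin_div_cos, Real.tan_arctan]; field_simp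
  have hFα := hFext.eq_of_antitone hsym hα
  have hmn_bracket : bracket F D α m n = (Fext α m - Fext α n) / (α m - α n) := by
    simp [bracket, hαmn, hFα]
  have hnm_bracket : bracket F D α n m = bracket F D α m n := by
    simp only [bracket, if_neg hαmn, if_neg (Ne.symm hαmn)]
    rw [← neg_sub (α m), ← neg_sub (F α m), neg_div_neg_eq]
  rw [of_mul_hermSingle hmn τ _ hnm_bracket, hmn_bracket]
  refine (hLF.hasDerivAt_diagonal_add_smul_hermSingle hFext hmn hτ hD hφ hρ (by simp [φ])
    hρφ hφh).congr_deriv ?_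
  simp [φ, rotatedDiagonal]
  congr 1
  field_simp
  ring

end SpectralFunction

end GateauxOffDiagonal

theorem LF_gateaux_offdiagonal_general {d : ℕ}
    (F Fext : (Fin d → ℝ) → Fin d → ℝ) (α : Fin d → ℝ)
    (LF : Matrix (Fin d) (Fin d) ℂ → Matrix (Fin d) (Fin d) ℂ)
    (D : (Fin d → ℝ) →L[ℝ] (Fin d → ℝ))
    (τ : ℂ) (hτ : ‖τ‖ = 1) (m n : Fin d) (hmn : m ≠ n)
    (hα : Antitone α)
    -- `Fext` is the extension `F^ext` of `F`, obtained by sorting the argument: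
    (hFext : ∀ x : Fin d → ℝ, ∃ σ : Equiv.Perm (Fin d),
      Antitone (x ∘ σ) ∧ Fext x = F (x ∘ σ) ∘ σ.symm)
    -- `F` is C¹ point-symmetric at `α`:
    (hsym : ∀ (x : Fin d → ℝ) (σ : Equiv.Perm (Fin d)), Fext (x ∘ σ) = Fext x ∘ σ)
    (hD : HasFDerivAt Fext D α)
    -- `LF` is the matrix function `𝓛_F` determined by spectral decompositions:
    (hLF : ∀ (B V : Matrix (Fin d) (Fin d) ℂ) (ξ : Fin d → ℝ),
      V ∈ Matrix.unitaryGroup (Fin d) ℂ → Antitone ξ →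
      B = V * Matrix.diagonal (fun i => (ξ i : ℂ)) * star V →
      LF B = V * Matrix.diagonal (fun i => (F ξ i : ℂ)) * star V) :
    Tendsto
      (fun h : ℝ => (h : ℂ)⁻¹ •
        (LF (Matrix.diagonal (fun i => (α i : ℂ))
              + h • (τ • Matrix.single m n (1 : ℂ)
                    + (starRingEnd ℂ) τ • Matrix.single n m (1 : ℂ)))
          - LF (Matrix.diagonal (fun i => (α i : ℂ)))))
      (nhdsWithin (0 : ℝ) {0}ᶜ)
      (nhds (Matrix.of fun i j => (bracket F D α i j : ℂ) *
        (τ • Matrix.single m n (1 : ℂ)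
          + (starRingEnd ℂ) τ • Matrix.single n m (1 : ℂ)) i j)) := by
  open GateauxOffDiagonal in
  have hderiv :
      HasDerivAt (fun h : ℝ => LF (diagonal (fun i => (α i : ℂ)) + h • hermSingle m n τ))
        (of fun i j => (bracket F D α i j : ℂ) * hermSingle m n τ i j) 0 := by
    rcases eq_or_ne (α m) (α n) with hαmn | hαmn
    · exact IsSpectralFunction.hasDerivAt_of_eigenvalue_eq hLF hFext hsym hmn hτ hD hαmn
    · exact IsSpectralFunction.hasDerivAt_of_eigenvalue_ne hLF hFext hsym hmn hτ hα hD hαmn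
  refine hderiv.tendsto_slope_zero.congr fun h => ?_
  rw [zero_add, zero_smul, add_zero, ← Complex.coe_smul, Complex.ofReal_inv]
  rfl

/-- **Lemma (off-diagonal Gateaux derivatives of `𝓛_F`).**
Let `τ ∈ ℂ` with `|τ| = 1`, let `F : ℝ^d_≥ → ℝ^d` be C¹ point-symmetric at
`α ∈ ℝ^d_≥` (with `F^ext` having derivative `D` at `α`), and let `m ≠ n`.
Then the Gateaux derivative of `𝓛_F` at `Λ_α` in the direction of the
Hermitian matrix `τ E_{m,n} + τ̄ E_{n,m}` exists and equals
`[F,α] ∘ (τ E_{m,n} + τ̄ E_{n,m})` (Hadamard product). -/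
theorem LF_gateaux_offdiagonal {d : ℕ}
    (F Fext : (Fin d → ℝ) → Fin d → ℝ) (α : Fin d → ℝ)
    (LF : Matrix (Fin d) (Fin d) ℂ → Matrix (Fin d) (Fin d) ℂ)
    (D : (Fin d → ℝ) →L[ℝ] (Fin d → ℝ))
    (τ : ℂ) (hτ : ‖τ‖ = 1) (m n : Fin d) (hmn : m ≠ n)
    (hα : Antitone α)
    -- `Fext` is the extension `F^ext` of `F`, obtained by sorting the argument:
    (hFext : ∀ x : Fin d → ℝ, ∃ σ : Equiv.Perm (Fin d),
      Antitone (x ∘ σ) ∧ Fext x = F (x ∘ σ) ∘ σ.symm)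
    -- `F` is C¹ point-symmetric at `α`:
    (hsym : ∀ (x : Fin d → ℝ) (σ : Equiv.Perm (Fin d)), Fext (x ∘ σ) = Fext x ∘ σ)
    (hC1 : ContDiffAt ℝ 1 Fext α)
    (hD : HasFDerivAt Fext D α)
    -- `LF` is the matrix function `𝓛_F` determined by spectral decompositions:
    (hLF : ∀ (B V : Matrix (Fin d) (Fin d) ℂ) (ξ : Fin d → ℝ),
      V ∈ Matrix.unitaryGroup (Fin d) ℂ → Antitone ξ →
      B = V * Matrix.diagonal (fun i => (ξ i : ℂ)) * star V →
      LF B = V * Matrix.diagonal (fun i => (F ξ i : ℂ)) * star V) :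
    Tendsto
      (fun h : ℝ => (h : ℂ)⁻¹ •
        (LF (Matrix.diagonal (fun i => (α i : ℂ))
              + h • (τ • Matrix.single m n (1 : ℂ)
                    + (starRingEnd ℂ) τ • Matrix.single n m (1 : ℂ)))
          - LF (Matrix.diagonal (fun i => (α i : ℂ)))))
      (nhdsWithin (0 : ℝ) {0}ᶜ)
      (nhds (Matrix.of fun i j => (bracket F D α i j : ℂ) *
        (τ • Matrix.single m n (1 : ℂ)
          + (starRingEnd ℂ) τ • Matrix.single n m (1 : ℂ)) i j)) :=
  LF_gateaux_offdiagonal_general F Fext α LF D τ hτ m n hmn hα hFext hsym hD hLF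
end

section
/- Let F : ℝ^d_≥ → ℝ^d be a vector-field that is block-constant at x ∈ ℝ^d_≥. Then the extension F^ext is point-symmetric at x, i.e. F^ext(Πx) = ΠF^ext(x) for all permutation matrices Π. Moreover, if F^ext is also C¹ at x, then its derivative matrix satisfies Π* (F^ext)'|_x Π = (F^ext)'|_x for every permutation matrix Π ∈ per(x). -/
/-!
Sorting a permutation `y ∘ π` of `y` yields the same non-increasing tuple as sorting `y`; the two
extensions differ only in how the sorted tuple is permuted back, and block-constancy at that tuple
makes this ambiguity invisible. This gives point-symmetry at `x`, and also at every `y` with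
distinct entries, where block-constancy holds trivially. Such `y` form a dense set, so
`y ↦ F^ext (Π y)` and `y ↦ Π F^ext y` agree on a dense set and at the fixed point `x` of `Π`;
their derivatives at `x`, `(F^ext)'|_x Π` and `Π (F^ext)'|_x`, therefore coincide.
-/

section Extension

variable {d : ℕ} {α β : Type*}

def BlockConstantAt (F : (Fin d → α) → Fin d → β) (z : Fin d → α) : Prop :=
  ∀ m n, z m = z n → F z m = F z n

def IsSortExtension [Preorder α] (F Fext : (Fin d → α) → Fin d → β) : Prop :=
  ∀ y : Fin d → α, ∃ σ : Equiv.Perm (Fin d), Antitone (y ∘ σ) ∧ Fext y = F (y ∘ σ) ∘ σ.symm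

theorem blockConstantAt_of_injective (F : (Fin d → α) → Fin d → β) {z : Fin d → α}
    (hz : Function.Injective z) : BlockConstantAt F z :=
  fun _ _ h ↦ by rw [hz h]

namespace IsSortExtension

variable [PartialOrder α] {F Fext : (Fin d → α) → Fin d → β}

theorem apply_comp_perm (hext : IsSortExtension F Fext) {y : Fin d → α}
    {ρ : Equiv.Perm (Fin d)} (hρ : Antitone (y ∘ ρ)) (hbc : BlockConstantAt F (y ∘ ρ))
    (π : Equiv.Perm (Fin d)) : Fext (y ∘ π) = Fext y ∘ π := by
  obtain ⟨τ, hτ, hτeq⟩ := hext (y ∘ π)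
  obtain ⟨κ, hκ, hκeq⟩ := hext y
  have hyτ : (y ∘ π) ∘ τ = y ∘ ρ := Tuple.unique_antitone (σ := π * τ) hτ hρ
  have hyκ : y ∘ κ = y ∘ ρ := Tuple.unique_antitone hκ hρ
  rw [hτeq, hκeq, hyτ, hyκ]
  funext k
  apply hbc
  have hτk : (y ∘ ρ) (τ.symm k) = y (π k) := by simpa using (congrFun hyτ (τ.symm k)).symm
  have hκk : (y ∘ ρ) (κ.symm (π k)) = y (π k) := by simpa using (congrFun hyκ (κ.symm (π k))).symm
  rw [hτk, hκk]

theorem apply_comp_perm_of_antitone (hext : IsSortExtension F Fext) {x : Fin d → α}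
    (hx : Antitone x) (hbc : BlockConstantAt F x) (π : Equiv.Perm (Fin d)) :
    Fext (x ∘ π) = Fext x ∘ π :=
  hext.apply_comp_perm (ρ := 1) hx hbc π

theorem apply_comp_perm_of_injective (hext : IsSortExtension F Fext) {y : Fin d → α}
    (hy : Function.Injective y) (π : Equiv.Perm (Fin d)) : Fext (y ∘ π) = Fext y ∘ π := by
  obtain ⟨ρ, hρ, -⟩ := hext y
  exact hext.apply_comp_perm hρ (blockConstantAt_of_injective F (hy.comp ρ.injective)) π

end IsSortExtension

end Extension

section Density

variable {𝕜 : Type*} [NontriviallyNormedField 𝕜] [CompleteSpace 𝕜] {ι : Type*} [Fintype ι]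

theorem dense_setOf_apply_ne {m n : ι} (hmn : m ≠ n) : Dense {y : ι → 𝕜 | y m ≠ y n} := by
  classical
  let L : (ι → 𝕜) →L[𝕜] 𝕜 :=
    ContinuousLinearMap.proj (R := 𝕜) (φ := fun _ ↦ 𝕜) m - ContinuousLinearMap.proj n
  have hL : Function.Surjective L := fun z ↦ ⟨Pi.single m z, by simp [L, hmn.symm]⟩
  have hpre : {y : ι → 𝕜 | y m ≠ y n} = L ⁻¹' {0}ᶜ := by
    ext y
    simp [L, sub_eq_zero]
  rw [hpre]
  exact (dense_compl_singleton 0).preimage (L.isOpenMap hL)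

theorem dense_setOf_injective : Dense {y : ι → 𝕜 | Function.Injective y} := by
  have h : {y : ι → 𝕜 | Function.Injective y} =
      ⋂ p : {p : ι × ι // p.1 ≠ p.2}, {y | y p.1.1 ≠ y p.1.2} := by
    ext y
    simp [Function.Injective, not_imp_not]
  rw [h]
  exact dense_iInter_of_isOpen (fun _ ↦ isOpen_ne_fun (continuous_apply _) (continuous_apply _))
    fun p ↦ dense_setOf_apply_ne p.2

end Density

theorem HasFDerivAt.comp_eq_of_semiconj_on_dense {𝕜 E F : Type*} [NontriviallyNormedField 𝕜]
    [NormedAddCommGroup E] [NormedSpace 𝕜 E] [NormedAddCommGroup F] [NormedSpace 𝕜 F]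
    {f : E → F} {f' : E →L[𝕜] F} {x : E} {P : E →L[𝕜] E} {Q : F →L[𝕜] F} {t : Set E}
    (hf : HasFDerivAt f f' x) (hPx : P x = x) (ht : Dense t)
    (hsemiconj : ∀ y ∈ insert x t, f (P y) = Q (f y)) : f'.comp P = Q.comp f' := by
  have hfP : HasFDerivAt (fun y ↦ f (P y)) (f'.comp P) x := (hPx ▸ hf).comp x P.hasFDerivAt
  have hQf : HasFDerivAt (fun y ↦ Q (f y)) (Q.comp f') x := Q.hasFDerivAt.comp x hf
  have hu : UniqueDiffWithinAt 𝕜 t x :=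
    uniqueDiffWithinAt_univ.mono_closure (by simp [ht.closure_eq])
  exact hu.eq hfP.hasFDerivWithinAt <| hQf.hasFDerivWithinAt.congr
    (fun y hy ↦ hsemiconj y (Set.mem_insert_of_mem x hy)) (hsemiconj x (Set.mem_insert x t))

/-- **Proposition (point-symmetry of the extension and invariance of its derivative).**
If a vector field `F : ℝ^d_≥ → ℝ^d` is block-constant at `x ∈ ℝ^d_≥`, then its
extension `F^ext` (obtained by sorting the argument) is point-symmetric at `x`:
`F^ext(Πx) = Π F^ext(x)` for all permutation matrices `Π` (here expressed as
`F^ext(x ∘ σ) = F^ext(x) ∘ σ` for all permutations `σ`).  Moreover, if `F^ext`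
is also C¹ at `x` with derivative `D`, then `Π* (F^ext)'|_x Π = (F^ext)'|_x`
for every permutation matrix `Π ∈ per(x)`, i.e. the matrix
`M i j = D (e_j) i` satisfies `M (σ i) (σ j) = M i j` whenever `x ∘ σ = x`. -/
theorem Fext_point_symmetric_and_derivative_invariant {d : ℕ}
    (F Fext : (Fin d → ℝ) → Fin d → ℝ) (x : Fin d → ℝ)
    (hx : Antitone x)
    -- `F` is block-constant at `x`:
    (hbc : ∀ m n, x m = x n → F x m = F x n)
    -- `Fext` is the extension `F^ext`, obtained by sorting the argument:
    (hFext : ∀ y : Fin d → ℝ, ∃ σ : Equiv.Perm (Fin d),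
      Antitone (y ∘ σ) ∧ Fext y = F (y ∘ σ) ∘ σ.symm) :
    (∀ σ : Equiv.Perm (Fin d), Fext (x ∘ σ) = Fext x ∘ σ) ∧
    (∀ D : (Fin d → ℝ) →L[ℝ] (Fin d → ℝ),
      ContDiffAt ℝ 1 Fext x → HasFDerivAt Fext D x →
      ∀ σ : Equiv.Perm (Fin d), x ∘ σ = x →
        ∀ i j, D (Pi.single (σ j) 1) (σ i) = D (Pi.single j 1) i) := by
  have hext : IsSortExtension F Fext := hFext
  have hsymm_x := hext.apply_comp_perm_of_antitone hx hbc
  refine ⟨hsymm_x, fun D _ hD σ hσ i j ↦ ?_⟩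
  let P : (Fin d → ℝ) →L[ℝ] (Fin d → ℝ) :=
    ContinuousLinearMap.pi fun k ↦ ContinuousLinearMap.proj (σ k)
  have hcomm : D.comp P = P.comp D := by
    refine hD.comp_eq_of_semiconj_on_dense hσ dense_setOf_injective ?_
    rintro y (rfl | hy)
    exacts [hsymm_x σ, hext.apply_comp_perm_of_injective hy σ]
  have hcol := congrFun (congrArg DFunLike.coe hcomm) (Pi.single (σ j) 1)
  have hsingle : P (Pi.single (σ j) 1) = Pi.single j 1 :=
    (Pi.single_comp_equiv σ (σ j) 1).trans (by rw [Equiv.symm_apply_apply])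
  simpa [hsingle, P] using (congrFun hcol i).symm
end

section
/- Let α ∈ ℝ^d and let M = F'|_α be a real d×d matrix (the derivative of a vector field F at α). Let α̃_1,…,α̃_k be the distinct values of α and S_m̃ = {m : α_m = α̃_m̃}. Then the identity Π*MΠ = M holds for all permutation matrices Π ∈ per(α) if and only if for each pair 1 ≤ m̃, ñ ≤ k there exist numbers r_m̃ and t_{m̃,ñ} such that the subblock of M with indices in S_m̃ × S_ñ equals r_m̃ I + t_{m̃,ñ} 1̄, where 1̄ is the all-ones matrix (for m̃ ≠ ñ the identity term is vacuous, so the subblock is the constant matrix t_{m̃,ñ} 1̄; for m̃ = ñ the diagonal entries equal r_m̃ + t_{m̃,m̃} and the off-diagonal entries equal t_{m̃,m̃}). -/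
open Matrix

/-- **Proposition (structure of permutation-invariant matrices).**
Let `α ∈ ℝ^d` and let `M` be a real `d × d` matrix.  Then `Π* M Π = M` holds
for all permutation matrices `Π ∈ per(α)` (i.e. `M (σ i) (σ j) = M i j` for
every permutation `σ` with `α ∘ σ = α`) if and only if for every pair of
blocks `S_m̃ × S_ñ` (blocks being the level sets of `α`) there are numbers
`r_m̃` and `t_{m̃,ñ}` such that the corresponding subblock of `M` equals
`r_m̃ I + t_{m̃,ñ} 1̄`.  Since the blocks are indexed by the distinct values of
`α`, the numbers `r` and `t` are encoded as functions of these values: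
`M i j = (if i = j then r (α i) else 0) + t (α i) (α j)`. -/
theorem perm_invariant_matrix_iff_block_structure {d : ℕ}
    (α : Fin d → ℝ) (M : Matrix (Fin d) (Fin d) ℝ) :
    (∀ σ : Equiv.Perm (Fin d), α ∘ σ = α → ∀ i j, M (σ i) (σ j) = M i j) ↔
    (∃ (r : ℝ → ℝ) (t : ℝ → ℝ → ℝ), ∀ i j,
      M i j = (if i = j then r (α i) else 0) + t (α i) (α j)) := by
  classical
  constructor
  · intro h
    have hswap : ∀ p q : Fin d, α p = α q → α ∘ ⇑(Equiv.swap p q) = α := by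
      intro p q hpq
      funext x
      rcases eq_or_ne x p with rfl | hx
      · simp [hpq]
      rcases eq_or_ne x q with rfl | hy
      · simp [hpq]
      · simp [Equiv.swap_apply_of_ne_of_ne hx hy]
    have key : ∀ i j i' j' : Fin d, i ≠ j → i' ≠ j' → α i = α i' → α j = α j' →
        M i j = M i' j' := by
      intro i j i' j' hij hij' ha hb
      set τ := Equiv.swap i i' with hτ
      have hτj : α (τ j) = α j := congrFun (hswap i i' ha) j
      set σ := τ.trans (Equiv.swap (τ j) j') with hσ
      have hα : α ∘ ⇑σ = α := by
        funext x
        have h1 := congrFun (hswap i i' ha) x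
        have h2 := congrFun (hswap (τ j) j' (hτj.trans hb)) (τ x)
        simp only [hσ, Equiv.coe_trans, Function.comp_apply] at *
        exact h2.trans h1
      have hi'ne : i' ≠ τ j := by
        intro hc
        apply hij
        have hti : τ i = τ j := by
          rw [← hc, hτ, Equiv.swap_apply_left]
        exact τ.injective hti
      have hσi : σ i = i' := by
        have : τ i = i' := by rw [hτ, Equiv.swap_apply_left]
        simp only [hσ, Equiv.trans_apply, this]
        exact Equiv.swap_apply_of_ne_of_ne hi'ne hij'
      have hσj : σ j = j' := by
        simp only [hσ, Equiv.trans_apply, Equiv.swap_apply_left]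
      have := h σ hα i j
      rw [hσi, hσj] at this
      exact this.symm
    have hdiag : ∀ i k : Fin d, α i = α k → M i i = M k k := by
      intro i k hik
      have := h (Equiv.swap i k) (hswap i k hik) i i
      simpa using this.symm
    set t : ℝ → ℝ → ℝ := fun a b =>
      if hp : ∃ p : Fin d × Fin d, α p.1 = a ∧ α p.2 = b ∧ p.1 ≠ p.2
      then M hp.choose.1 hp.choose.2 else 0 with ht
    set r : ℝ → ℝ := fun a =>
      if hk : ∃ k, α k = a then M hk.choose hk.choose - t a a else 0 with hr
    refine ⟨r, t, ?_⟩
    have ht_eq : ∀ i j : Fin d, i ≠ j → t (α i) (α j) = M i j := by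
      intro i j hij
      have hp : ∃ p : Fin d × Fin d, α p.1 = α i ∧ α p.2 = α j ∧ p.1 ≠ p.2 :=
        ⟨(i, j), rfl, rfl, hij⟩
      simp only [ht]
      rw [dif_pos hp]
      exact (key i j hp.choose.1 hp.choose.2 hij hp.choose_spec.2.2
        hp.choose_spec.1.symm hp.choose_spec.2.1.symm).symm
    intro i j
    rcases eq_or_ne i j with rfl | hij
    · rw [if_pos rfl, hr]
      have hk : ∃ k, α k = α i := ⟨i, rfl⟩
      simp only
      rw [dif_pos hk]
      have := hdiag i hk.choose hk.choose_spec.symm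
      linarith
    · rw [if_neg hij, ht_eq i j hij]; ring
  · rintro ⟨r, t, hM⟩ σ hσ i j
    have hα : ∀ x, α (σ x) = α x := fun x => congrFun hσ x
    rw [hM, hM, hα i, hα j]
    simp [σ.injective.eq_iff]
end

section
/- Let F : ℝ^d_≥ → ℝ^d be Lipschitz continuous with constant ‖F‖_Lip and C¹ point-symmetric at a point α ∈ ℝ^d_≥. Then for every pair of indices m, n one has |[F,α](m,n)| ≤ ‖F‖_Lip. -/
open Matrix

/-- The Euclidean norm of a vector in `ℝ^d`. -/
noncomputable def euclidEnorm {d : ℕ} (x : Fin d → ℝ) : ℝ :=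
  Real.sqrt (∑ i, (x i) ^ 2)

/-! Near `α`, every permutation sorting `x` also sorts `α`, so `Fext x` and `Fext α` can be
compared through `F` at two sorted points: `Fext` is `K`-Lipschitz at `α`, hence `‖D‖ ≤ K` for
the Euclidean norm. This bounds the diagonal entries of `[F,α]`. If `α m = α n` with `m ≠ n`, the
transposition of `m` and `n` fixes `α` and therefore commutes with `D`, and testing `D` on
`eₘ - eₙ` bounds `D eₘ m - D eₘ n`. If `α m ≠ α n`, telescoping reduces the bound to adjacent
indices `i ⋖ j`; replacing `α i` and `α j` by their mean gives a sorted point `z` with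
`F z i = F z j`, and the Lipschitz bound between `α` and `z` gives
`|F α i - F α j| ≤ K (α i - α j)`. -/

open Filter Topology

section euclidEnorm

variable {d : ℕ}

lemma euclidEnorm_eq_norm (x : Fin d → ℝ) : euclidEnorm x = ‖WithLp.toLp 2 x‖ := by
  simp [euclidEnorm, EuclideanSpace.norm_eq]

lemma euclidEnorm_smul (t : ℝ) (x : Fin d → ℝ) : euclidEnorm (t • x) = |t| * euclidEnorm x := by
  simp only [euclidEnorm_eq_norm, WithLp.toLp_smul, norm_smul, Real.norm_eq_abs]

lemma euclidEnorm_comp_perm (x : Fin d → ℝ) (σ : Equiv.Perm (Fin d)) :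
    euclidEnorm (x ∘ σ) = euclidEnorm x := by
  simp only [euclidEnorm, Function.comp_apply, Equiv.sum_comp σ (fun i => x i ^ 2)]

lemma abs_apply_le_euclidEnorm (x : Fin d → ℝ) (i : Fin d) : |x i| ≤ euclidEnorm x := by
  simpa [euclidEnorm_eq_norm] using PiLp.norm_apply_le (WithLp.toLp 2 x) i

lemma abs_sub_apply_le_euclidEnorm (x : Fin d → ℝ) {i j : Fin d} (hij : i ≠ j) :
    |x i - x j| ≤ √2 * euclidEnorm x := by
  have hpair : x i ^ 2 + x j ^ 2 ≤ ∑ k, x k ^ 2 := by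
    have := Finset.sum_le_univ_sum_of_nonneg (s := {i, j}) fun k => sq_nonneg (x k)
    rwa [Finset.sum_pair hij] at this
  rw [euclidEnorm, ← Real.sqrt_mul zero_le_two, ← Real.sqrt_sq_eq_abs]
  exact Real.sqrt_le_sqrt (by nlinarith [sq_nonneg (x i + x j)])

lemma euclidEnorm_single (i : Fin d) : euclidEnorm (Pi.single i 1) = 1 := by
  simp [euclidEnorm_eq_norm]

lemma euclidEnorm_single_sub_single {i j : Fin d} (hij : i ≠ j) :
    euclidEnorm (Pi.single i 1 - Pi.single j 1) = √2 := by
  rw [euclidEnorm, Fintype.sum_eq_add i j hij fun k hk => by simp [hk.1, hk.2]]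
  norm_num [hij, hij.symm]

lemma HasFDerivAt.euclidEnorm_apply_le {f : (Fin d → ℝ) → Fin d → ℝ}
    {D : (Fin d → ℝ) →L[ℝ] (Fin d → ℝ)} {a : Fin d → ℝ} {K : ℝ} (hf : HasFDerivAt f D a)
    (hK : 0 ≤ K) (hlip : ∀ᶠ x in 𝓝 a, euclidEnorm (f x - f a) ≤ K * euclidEnorm (x - a))
    (v : Fin d → ℝ) : euclidEnorm (D v) ≤ K * euclidEnorm v := by
  let e := EuclideanSpace.equiv (Fin d) ℝ
  have hg : HasFDerivAt (e.symm ∘ f ∘ e) ((e.symm : _ →L[ℝ] _) ∘L D ∘L (e : _ →L[ℝ] _))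
      (e.symm a) :=
    e.symm.hasFDerivAt.comp _ (hf.comp _ (by simpa using e.hasFDerivAt))
  have hlip' : ∀ᶠ y in 𝓝 (e.symm a),
      ‖(e.symm ∘ f ∘ e) y - (e.symm ∘ f ∘ e) (e.symm a)‖ ≤ K * ‖y - e.symm a‖ := by
    have he := e.continuous.tendsto (e.symm a)
    rw [e.apply_symm_apply] at he
    filter_upwards [he.eventually hlip] with y hy
    simpa [e, euclidEnorm_eq_norm, PiLp.coe_continuousLinearEquiv,
      PiLp.coe_symm_continuousLinearEquiv] using hy
  have hDv := (ContinuousLinearMap.le_opNorm _ (e.symm v)).trans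
    (mul_le_mul_of_nonneg_right (hg.le_of_lip' hK hlip') (norm_nonneg _))
  simpa [e, euclidEnorm_eq_norm, PiLp.coe_continuousLinearEquiv,
    PiLp.coe_symm_continuousLinearEquiv] using hDv

end euclidEnorm

lemma comp_swap_eq_self {ι β : Type*} [DecidableEq ι] {x : ι → β} {i j : ι} (h : x i = x j) :
    x ∘ Equiv.swap i j = x := by
  ext k
  rcases eq_or_ne k i with rfl | hki
  · simp [h]
  rcases eq_or_ne k j with rfl | hkj
  · simp [h]
  · simp [Equiv.swap_apply_of_ne_of_ne hki hkj]

lemma Antitone.comp_perm_eq {n : ℕ} {α : Type*} [PartialOrder α] {x : Fin n → α}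
    (hx : Antitone x) {σ : Equiv.Perm (Fin n)} (hσ : Antitone (x ∘ σ)) : x ∘ σ = x :=
  Tuple.unique_antitone (τ := 1) hσ hx

lemma antitone_comp_of_lt_imp_lt {ι κ : Type*} [Preorder ι] [LinearOrder κ] {x y : ι → κ}
    {σ : Equiv.Perm ι} (hx : Antitone (x ∘ σ)) (h : ∀ i j, y i < y j → x i < x j) :
    Antitone (y ∘ σ) :=
  fun _ _ hab => not_lt.1 fun hlt => (h _ _ hlt).not_ge (hx hab)

lemma eventually_lt_imp_lt {ι : Type*} [Finite ι] (α : ι → ℝ) :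
    ∀ᶠ x in 𝓝 α, ∀ i j, α i < α j → x i < x j := by
  simp only [eventually_all]
  intro i j hij
  exact (continuous_apply i).continuousAt.eventually_lt (continuous_apply j).continuousAt hij

def PermEquivariant {ι : Type*} (f : (ι → ℝ) → ι → ℝ) : Prop :=
  ∀ (x : ι → ℝ) (σ : Equiv.Perm ι), f (x ∘ σ) = f x ∘ σ

lemma PermEquivariant.apply_eq_apply {ι : Type*} [DecidableEq ι] {f : (ι → ℝ) → ι → ℝ}
    (hf : PermEquivariant f) {x : ι → ℝ} {i j : ι} (h : x i = x j) : f x i = f x j := by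
  simpa [comp_swap_eq_self h] using congrFun (hf x (Equiv.swap i j)) i

lemma PermEquivariant.map_comp_perm_of_hasFDerivAt {ι : Type*} [Fintype ι]
    {f : (ι → ℝ) → ι → ℝ} (hf : PermEquivariant f) {D : (ι → ℝ) →L[ℝ] (ι → ℝ)} {a : ι → ℝ}
    (hD : HasFDerivAt f D a) {σ : Equiv.Perm ι} (hσ : a ∘ σ = a) (v : ι → ℝ) :
    D (v ∘ σ) = D v ∘ σ := by
  let P : (ι → ℝ) →L[ℝ] (ι → ℝ) := (LinearMap.funLeft ℝ ℝ σ).toContinuousLinearMap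
  have h₁ : HasFDerivAt (fun x => f (P x)) (D ∘L P) a := by
    refine HasFDerivAt.comp a ?_ P.hasFDerivAt
    simpa [P, LinearMap.funLeft, hσ] using hD
  have h₂ : HasFDerivAt (fun x => P (f x)) (P ∘L D) a := P.hasFDerivAt.comp a hD
  have h₁₂ : (fun x => f (P x)) = fun x => P (f x) := funext fun x => hf x σ
  rw [h₁₂] at h₁
  exact DFunLike.congr_fun (h₁.unique h₂) v

lemma abs_apply_single_sub_apply_single_le {d : ℕ} {D : (Fin d → ℝ) →L[ℝ] (Fin d → ℝ)} {K : ℝ}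
    (hD : ∀ v, euclidEnorm (D v) ≤ K * euclidEnorm v) {m n : Fin d} (hmn : m ≠ n)
    (hswap : ∀ v, D (v ∘ Equiv.swap m n) = D v ∘ Equiv.swap m n) :
    |D (Pi.single m 1) m - D (Pi.single m 1) n| ≤ K := by
  have hsingle : D (Pi.single n 1) = D (Pi.single m 1) ∘ Equiv.swap m n := by
    rw [← hswap]
    congr 1
    ext k
    simp [Pi.single_apply, Equiv.swap_apply_eq_iff]
  set w : Fin d → ℝ := Pi.single m 1 - Pi.single n 1
  have hw : D w m - D w n = 2 * (D (Pi.single m 1) m - D (Pi.single m 1) n) := by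
    simp only [w, map_sub, Pi.sub_apply, hsingle, Function.comp_apply, Equiv.swap_apply_left,
      Equiv.swap_apply_right]
    ring
  have hbound := (abs_sub_apply_le_euclidEnorm (D w) hmn).trans
    (mul_le_mul_of_nonneg_left (hD w) (Real.sqrt_nonneg 2))
  rw [hw, euclidEnorm_single_sub_single hmn, abs_mul, abs_two, mul_left_comm,
    Real.mul_self_sqrt zero_le_two] at hbound
  linarith

def IsSortedExtension {d : ℕ} (F Fext : (Fin d → ℝ) → Fin d → ℝ) : Prop :=
  ∀ x : Fin d → ℝ, ∃ σ : Equiv.Perm (Fin d), Antitone (x ∘ σ) ∧ Fext x = F (x ∘ σ) ∘ σ.symm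

def LipschitzOnAntitone {d : ℕ} (K : ℝ) (F : (Fin d → ℝ) → Fin d → ℝ) : Prop :=
  ∀ x y : Fin d → ℝ, Antitone x → Antitone y → euclidEnorm (F x - F y) ≤ K * euclidEnorm (x - y)

namespace IsSortedExtension

variable {d : ℕ} {F Fext : (Fin d → ℝ) → Fin d → ℝ} {K : ℝ}

lemma eq_of_antitone (hext : IsSortedExtension F Fext) (hsym : PermEquivariant Fext)
    {x : Fin d → ℝ} (hx : Antitone x) : Fext x = F x := by
  obtain ⟨τ, hτ, hFx⟩ := hext x
  rw [hx.comp_perm_eq hτ] at hFx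
  have hinv : Fext x = Fext x ∘ τ := by simpa [hx.comp_perm_eq hτ] using hsym x τ
  rw [hinv, hFx]
  ext
  simp

lemma eq_comp_symm (hext : IsSortedExtension F Fext) (hsym : PermEquivariant Fext)
    {x : Fin d → ℝ} {σ : Equiv.Perm (Fin d)} (hσ : Antitone (x ∘ σ)) :
    Fext x = F (x ∘ σ) ∘ σ.symm := by
  rw [← hext.eq_of_antitone hsym hσ, ← hsym]
  simp [Function.comp_assoc]

lemma euclidEnorm_sub_le (hext : IsSortedExtension F Fext) (hsym : PermEquivariant Fext)
    (hLip : LipschitzOnAntitone K F) {x y : Fin d → ℝ} {σ : Equiv.Perm (Fin d)}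
    (hx : Antitone (x ∘ σ)) (hy : Antitone (y ∘ σ)) :
    euclidEnorm (Fext x - Fext y) ≤ K * euclidEnorm (x - y) := by
  rw [hext.eq_comp_symm hsym hx, hext.eq_comp_symm hsym hy, ← Pi.sub_comp,
    euclidEnorm_comp_perm, ← euclidEnorm_comp_perm (x - y) σ]
  exact hLip _ _ hx hy

lemma eventually_euclidEnorm_sub_le (hext : IsSortedExtension F Fext)
    (hsym : PermEquivariant Fext) (hLip : LipschitzOnAntitone K F) (α : Fin d → ℝ) :
    ∀ᶠ x in 𝓝 α, euclidEnorm (Fext x - Fext α) ≤ K * euclidEnorm (x - α) := by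
  filter_upwards [eventually_lt_imp_lt α] with x hx
  obtain ⟨σ, hσ, -⟩ := hext x
  exact hext.euclidEnorm_sub_le hsym hLip hσ (antitone_comp_of_lt_imp_lt hσ hx)

lemma abs_sub_le_of_covBy (hext : IsSortedExtension F Fext) (hsym : PermEquivariant Fext)
    (hLip : LipschitzOnAntitone K F) {α : Fin d → ℝ} (hα : Antitone α) {i j : Fin d}
    (hij : i ⋖ j) : |F α i - F α j| ≤ K * (α i - α j) := by
  have hαij : α j ≤ α i := hα hij.le
  set z : Fin d → ℝ := fun k => if k = i ∨ k = j then (α i + α j) / 2 else α k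
  have hz_anti : Antitone z := by
    intro k l hkl
    simp only [z]
    split_ifs with hl hk hk
    · exact le_rfl
    · have hki : k < i := by
        rcases hl with rfl | rfl
        · exact lt_of_le_of_ne hkl fun h => hk (Or.inl h)
        · exact lt_of_le_of_ne (hij.le_of_lt (lt_of_le_of_ne hkl fun h => hk (Or.inr h)))
            fun h => hk (Or.inl h)
      linarith [hα hki.le]
    · have hjl : j < l := by
        rcases hk with rfl | rfl
        · exact lt_of_le_of_ne (hij.ge_of_gt (lt_of_le_of_ne hkl fun h => hl (Or.inl h.symm)))
            fun h => hl (Or.inr h.symm)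
        · exact lt_of_le_of_ne hkl fun h => hl (Or.inr h.symm)
      linarith [hα hjl.le]
    · exact hα hkl
  have hαz : α - z = ((α i - α j) / 2) • (Pi.single i 1 - Pi.single j 1) := by
    ext k
    by_cases hki : k = i
    · subst hki
      simp only [z, Pi.sub_apply, Pi.smul_apply, smul_eq_mul, true_or, ↓reduceIte,
        Pi.single_eq_same, Pi.single_eq_of_ne hij.ne]
      ring
    by_cases hkj : k = j
    · subst hkj
      simp only [z, Pi.sub_apply, Pi.smul_apply, smul_eq_mul, or_true, ↓reduceIte,
        Pi.single_eq_same, Pi.single_eq_of_ne hij.ne.symm]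
      ring
    · simp [z, hki, hkj]
  have hFz : F z i = F z j := by
    rw [← hext.eq_of_antitone hsym hz_anti]
    exact hsym.apply_eq_apply (by simp [z])
  calc |F α i - F α j| = |(F α - F z) i - (F α - F z) j| := by simp [hFz]
    _ ≤ √2 * euclidEnorm (F α - F z) := abs_sub_apply_le_euclidEnorm _ hij.ne
    _ ≤ √2 * (K * euclidEnorm (α - z)) := by gcongr; exact hLip _ _ hα hz_anti
    _ = K * (α i - α j) := by
      rw [hαz, euclidEnorm_smul, euclidEnorm_single_sub_single hij.ne,
        abs_of_nonneg (by linarith)]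
      ring_nf
      rw [Real.sq_sqrt zero_le_two]
      ring

lemma abs_sub_le_mul_abs_sub (hext : IsSortedExtension F Fext) (hsym : PermEquivariant Fext)
    (hLip : LipschitzOnAntitone K F) {α : Fin d → ℝ} (hα : Antitone α) (m n : Fin d) :
    |F α m - F α n| ≤ K * |α m - α n| := by
  wlog hmn : m ≤ n generalizing m n
  · rw [abs_sub_comm, abs_sub_comm (α m)]
    exact this n m (le_of_not_ge hmn)
  have hcov {i j : Fin d} (hij : i ⋖ j) := abs_le.1 (hext.abs_sub_le_of_covBy hsym hLip hα hij)
  have hsub : Antitone (K • α - F α) := (antitone_iff_forall_covBy _).2 fun i j hij => by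
    simp only [Pi.sub_apply, Pi.smul_apply, smul_eq_mul]
    linarith [(hcov hij).2]
  have hadd : Antitone (K • α + F α) := (antitone_iff_forall_covBy _).2 fun i j hij => by
    simp only [Pi.add_apply, Pi.smul_apply, smul_eq_mul]
    linarith [(hcov hij).1]
  have h₁ := hsub hmn
  have h₂ := hadd hmn
  simp only [Pi.sub_apply, Pi.add_apply, Pi.smul_apply, smul_eq_mul] at h₁ h₂
  rw [abs_of_nonneg (sub_nonneg.2 (hα hmn)), abs_le]
  constructor <;> linarith

end IsSortedExtension

theorem bracket_le_lipschitz_general {d : ℕ}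
    (F Fext : (Fin d → ℝ) → Fin d → ℝ) (α : Fin d → ℝ)
    (D : (Fin d → ℝ) →L[ℝ] (Fin d → ℝ)) (K : ℝ) (hK : 0 ≤ K)
    (hα : Antitone α)
    -- `F` is Lipschitz with constant `K` on `ℝ^d_≥`, w.r.t. the Euclidean norm:
    (hLip : ∀ x y : Fin d → ℝ, Antitone x → Antitone y →
      euclidEnorm (F x - F y) ≤ K * euclidEnorm (x - y))
    -- `Fext` is the extension `F^ext` of `F`, obtained by sorting the argument:
    (hFext : ∀ x : Fin d → ℝ, ∃ σ : Equiv.Perm (Fin d),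
      Antitone (x ∘ σ) ∧ Fext x = F (x ∘ σ) ∘ σ.symm)
    -- `F` is C¹ point-symmetric at `α`:
    (hsym : ∀ (x : Fin d → ℝ) (σ : Equiv.Perm (Fin d)), Fext (x ∘ σ) = Fext x ∘ σ)
    (hD : HasFDerivAt Fext D α) :
    ∀ m n : Fin d, |bracket F D α m n| ≤ K := by
  have hDle : ∀ v, euclidEnorm (D v) ≤ K * euclidEnorm v :=
    hD.euclidEnorm_apply_le hK (IsSortedExtension.eventually_euclidEnorm_sub_le hFext hsym hLip α)
  intro m n
  unfold bracket
  split_ifs with hmn hmm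
  · subst hmm
    simpa [euclidEnorm_single] using
      (abs_apply_le_euclidEnorm _ m).trans (hDle (Pi.single m 1))
  · exact abs_apply_single_sub_apply_single_le hDle hmm
      (PermEquivariant.map_comp_perm_of_hasFDerivAt hsym hD (comp_swap_eq_self hmn))
  · rw [abs_div, div_le_iff₀ (abs_pos.2 (sub_ne_zero.2 hmn))]
    exact IsSortedExtension.abs_sub_le_mul_abs_sub hFext hsym hLip hα m n

/-- **Lemma (entrywise bound on `[F,α]`).**
Let `F : ℝ^d_≥ → ℝ^d` be Lipschitz continuous with constant `K` (w.r.t. the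
Euclidean norm) and C¹ point-symmetric at `α ∈ ℝ^d_≥` (its extension `F^ext`
being point-symmetric and C¹ at `α`, with derivative `D`).  Then
`|[F,α](m,n)| ≤ K` for every pair of indices `m, n`. -/
theorem bracket_le_lipschitz {d : ℕ}
    (F Fext : (Fin d → ℝ) → Fin d → ℝ) (α : Fin d → ℝ)
    (D : (Fin d → ℝ) →L[ℝ] (Fin d → ℝ)) (K : ℝ) (hK : 0 ≤ K)
    (hα : Antitone α)
    -- `F` is Lipschitz with constant `K` on `ℝ^d_≥`, w.r.t. the Euclidean norm:
    (hLip : ∀ x y : Fin d → ℝ, Antitone x → Antitone y →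
      euclidEnorm (F x - F y) ≤ K * euclidEnorm (x - y))
    -- `Fext` is the extension `F^ext` of `F`, obtained by sorting the argument:
    (hFext : ∀ x : Fin d → ℝ, ∃ σ : Equiv.Perm (Fin d),
      Antitone (x ∘ σ) ∧ Fext x = F (x ∘ σ) ∘ σ.symm)
    -- `F` is C¹ point-symmetric at `α`:
    (hsym : ∀ (x : Fin d → ℝ) (σ : Equiv.Perm (Fin d)), Fext (x ∘ σ) = Fext x ∘ σ)
    (hC1 : ContDiffAt ℝ 1 Fext α)
    (hD : HasFDerivAt Fext D α) :
    ∀ m n : Fin d, |bracket F D α m n| ≤ K :=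
  bracket_le_lipschitz_general F Fext α D K hK hα hLip hFext hsym hD
end

section
/- Let 𝓕 be a map from the d×d Hermitian matrices to themselves satisfying U*𝓕(A)U = 𝓕(U*AU) for all Hermitian A and all unitary U. Define F : ℝ^d_≥ → ℝ^d by letting F(α) be the diagonal entries of 𝓕(Λ_α) (in particular 𝓕(Λ_α) is diagonal). Then F is block-constant, i.e. F_m(α) = F_n(α) whenever α_m = α_n, and 𝓕(A) = U_A diag(F(α)) U_A* for every Hermitian A, where A = U_A Λ_α U_A* is any spectral decomposition of A with α non-increasingly ordered. -/
/-!
A unitary `U` with `U* Λ U = Λ` also fixes `𝓕 Λ`, by equivariance. For diagonal `Λ` two kinds of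
such `U` suffice: the sign flips `diag(1, …, -1, …, 1)`, which negate the off-diagonal entries
of row `i`, force `𝓕 Λ` to be diagonal; the transposition matrix of `m` and `n`, which fixes `Λ`
when `α m = α n`, exchanges the diagonal entries `m` and `n` of `𝓕 Λ`. For a general Hermitian
`A = U Λ U*`, equivariance under `U*` gives `𝓕 A = U 𝓕(Λ) U*`.
-/

open Matrix

namespace Matrix

variable {n R : Type*} [Fintype n] [DecidableEq n]

lemma swap_mul_diagonal_mul_swap [Semiring R] {i j : n} {a : n → R} (hij : a i = a j) :
    swap R i j * diagonal a * swap R i j = diagonal a := by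
  rw [swap, PEquiv.toMatrix_toPEquiv_mul, PEquiv.mul_toMatrix_toPEquiv, submatrix_submatrix,
    Equiv.symm_swap]
  exact (submatrix_diagonal_equiv a _).trans
    (congrArg diagonal (funext (Equiv.apply_swap_eq_self hij)))

variable [CommRing R] [StarRing R]

lemma swap_mem_unitaryGroup (i j : n) : swap R i j ∈ unitaryGroup n R := by
  rw [mem_unitaryGroup_iff, star_eq_conjTranspose, conjTranspose_swap, swap_mul_self]

lemma diagonal_mem_unitaryGroup {u : n → R} (hu : ∀ i, u i ∈ unitary R) :
    diagonal u ∈ unitaryGroup n R := by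
  rw [mem_unitaryGroup_iff, star_eq_conjTranspose, diagonal_conjTranspose,
    diagonal_mul_diagonal, ← diagonal_one]
  exact congrArg diagonal (funext fun i => Unitary.mul_star_self_of_mem (hu i))

lemma star_mul_diagonal_mul_of_mem_unitaryGroup {u : n → R}
    (hu : diagonal u ∈ unitaryGroup n R) (a : n → R) :
    star (diagonal u) * diagonal a * diagonal u = diagonal a := by
  rw [mul_assoc, diagonal_mul_diagonal, funext fun i => mul_comm (a i) (u i),
    ← diagonal_mul_diagonal, ← mul_assoc, mem_unitaryGroup_iff'.mp hu, one_mul]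

lemma diagonal_update_one_neg_one_mem_unitaryGroup (i : n) :
    diagonal (Function.update (1 : n → R) i (-1)) ∈ unitaryGroup n R := by
  refine diagonal_mem_unitaryGroup fun k => ?_
  rw [Function.update_apply]
  split_ifs <;> simp [Unitary.mem_iff]

lemma eq_diagonal_of_forall_star_mul_mul_eq [IsAddTorsionFree R] {M : Matrix n n R}
    (hM : ∀ i, star (diagonal (Function.update (1 : n → R) i (-1))) * M *
      diagonal (Function.update (1 : n → R) i (-1)) = M) :
    M = diagonal fun i => M i i := by
  ext i j
  rcases eq_or_ne i j with rfl | hij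
  · simp
  · have h := congrFun (congrFun (hM i) i) j
    simp only [star_eq_conjTranspose, diagonal_conjTranspose, mul_diagonal, diagonal_mul,
      Pi.star_apply, Function.update_self, star_neg, star_one, neg_mul, one_mul, ne_eq, hij.symm,
      not_false_eq_true, Function.update_of_ne, Pi.one_apply, mul_one] at h
    simpa [hij] using self_eq_neg.mp h.symm

end Matrix

variable {n R : Type*} [Fintype n] [DecidableEq n] [CommRing R] [StarRing R]

def IsUnitarilyEquivariant (𝓕 : Matrix n n R → Matrix n n R) : Prop :=
  ∀ A U : Matrix n n R, A.IsHermitian → U ∈ unitaryGroup n R →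
    star U * 𝓕 A * U = 𝓕 (star U * A * U)

namespace IsUnitarilyEquivariant

variable {𝓕 : Matrix n n R → Matrix n n R} (h : IsUnitarilyEquivariant 𝓕)
include h

lemma star_mul_mul_eq_of_star_mul_mul_eq {A U : Matrix n n R} (hA : A.IsHermitian)
    (hU : U ∈ unitaryGroup n R) (hUA : star U * A * U = A) : star U * 𝓕 A * U = 𝓕 A := by
  rw [h A U hA hU, hUA]

lemma apply_mul_mul_star {A U : Matrix n n R} (hA : A.IsHermitian)
    (hU : U ∈ unitaryGroup n R) : 𝓕 (U * A * star U) = U * 𝓕 A * star U := by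
  simpa using (h A (star U) hA (Unitary.star_mem hU)).symm

lemma apply_diagonal [IsAddTorsionFree R] {a : n → R} (ha : (diagonal a).IsHermitian) :
    𝓕 (diagonal a) = diagonal fun i => 𝓕 (diagonal a) i i :=
  eq_diagonal_of_forall_star_mul_mul_eq fun i =>
    h.star_mul_mul_eq_of_star_mul_mul_eq ha (diagonal_update_one_neg_one_mem_unitaryGroup i)
      (star_mul_diagonal_mul_of_mem_unitaryGroup
        (diagonal_update_one_neg_one_mem_unitaryGroup i) a)

lemma apply_diagonal_apply_eq {a : n → R} (ha : (diagonal a).IsHermitian) {i j : n}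
    (hij : a i = a j) : 𝓕 (diagonal a) i i = 𝓕 (diagonal a) j j := by
  have hswap := h.star_mul_mul_eq_of_star_mul_mul_eq ha (swap_mem_unitaryGroup i j)
    (by rw [star_eq_conjTranspose, conjTranspose_swap, swap_mul_diagonal_mul_swap hij])
  rw [star_eq_conjTranspose, conjTranspose_swap] at hswap
  simpa using congrFun (congrFun hswap.symm i) i

end IsUnitarilyEquivariant

theorem isotropic_eq_LF_general {d : ℕ}
    (𝓕 : Matrix (Fin d) (Fin d) ℂ → Matrix (Fin d) (Fin d) ℂ)
    (hequiv : ∀ (A U : Matrix (Fin d) (Fin d) ℂ), A.IsHermitian →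
      U ∈ Matrix.unitaryGroup (Fin d) ℂ →
      star U * 𝓕 A * U = 𝓕 (star U * A * U)) :
    (∀ α : Fin d → ℝ, Antitone α →
      𝓕 (Matrix.diagonal fun i => (α i : ℂ)) =
        Matrix.diagonal (fun i => 𝓕 (Matrix.diagonal fun j => (α j : ℂ)) i i)) ∧
    (∀ α : Fin d → ℝ, Antitone α → ∀ m n : Fin d, α m = α n →
      𝓕 (Matrix.diagonal fun i => (α i : ℂ)) m m =
        𝓕 (Matrix.diagonal fun i => (α i : ℂ)) n n) ∧
    (∀ (A U : Matrix (Fin d) (Fin d) ℂ) (α : Fin d → ℝ), A.IsHermitian →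
      U ∈ Matrix.unitaryGroup (Fin d) ℂ → Antitone α →
      A = U * Matrix.diagonal (fun i => (α i : ℂ)) * star U →
      𝓕 A = U * Matrix.diagonal
        (fun i => 𝓕 (Matrix.diagonal fun j => (α j : ℂ)) i i) * star U) := by
  have h𝓕 : IsUnitarilyEquivariant 𝓕 := hequiv
  have hΛ (α : Fin d → ℝ) : (diagonal fun i => (α i : ℂ)).IsHermitian :=
    isHermitian_diagonal_iff.mpr fun i => Complex.conj_ofReal (α i)
  refine ⟨fun α _ => h𝓕.apply_diagonal (hΛ α),
    fun α _ m n hmn => h𝓕.apply_diagonal_apply_eq (hΛ α) (congrArg _ hmn), ?_⟩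
  rintro A U α - hU - rfl
  rw [h𝓕.apply_mul_mul_star (hΛ α) hU, ← h𝓕.apply_diagonal (hΛ α)]

/-- **Isotropic matrix functions come from block-constant vector fields.**
Let `𝓕` map Hermitian `d × d` matrices to Hermitian matrices and satisfy
`U* 𝓕(A) U = 𝓕(U* A U)` for all Hermitian `A` and unitary `U`.  Define
`F(α)` as the vector of diagonal entries of `𝓕(Λ_α)`.  Then:
(i) `𝓕(Λ_α)` is diagonal, (ii) `F` is block-constant (`F_m(α) = F_n(α)`
whenever `α_m = α_n`), and (iii) `𝓕(A) = U diag(F(α)) U*` for every spectral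
decomposition `A = U Λ_α U*` with `α` non-increasingly ordered. -/
theorem isotropic_eq_LF {d : ℕ}
    (𝓕 : Matrix (Fin d) (Fin d) ℂ → Matrix (Fin d) (Fin d) ℂ)
    (hHerm : ∀ A : Matrix (Fin d) (Fin d) ℂ, A.IsHermitian → (𝓕 A).IsHermitian)
    (hequiv : ∀ (A U : Matrix (Fin d) (Fin d) ℂ), A.IsHermitian →
      U ∈ Matrix.unitaryGroup (Fin d) ℂ →
      star U * 𝓕 A * U = 𝓕 (star U * A * U)) :
    (∀ α : Fin d → ℝ, Antitone α →
      𝓕 (Matrix.diagonal fun i => (α i : ℂ)) =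
        Matrix.diagonal (fun i => 𝓕 (Matrix.diagonal fun j => (α j : ℂ)) i i)) ∧
    (∀ α : Fin d → ℝ, Antitone α → ∀ m n : Fin d, α m = α n →
      𝓕 (Matrix.diagonal fun i => (α i : ℂ)) m m =
        𝓕 (Matrix.diagonal fun i => (α i : ℂ)) n n) ∧
    (∀ (A U : Matrix (Fin d) (Fin d) ℂ) (α : Fin d → ℝ), A.IsHermitian →
      U ∈ Matrix.unitaryGroup (Fin d) ℂ → Antitone α →
      A = U * Matrix.diagonal (fun i => (α i : ℂ)) * star U →
      𝓕 A = U * Matrix.diagonal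
        (fun i => 𝓕 (Matrix.diagonal fun j => (α j : ℂ)) i i) * star U) :=
  isotropic_eq_LF_general 𝓕 hequiv
end
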